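/- arXiv:1409.3643 — 10 statements merged into one kernel-verified Lean document; each statement's English description precedes it below -/
import Mathlib

section
/- For any t ∈ ℝ and a ∈ ℝ, the limit as ε → 0+ of ∫_t^∞ cos(ar) e^{-εr} dr, taken in the sense of distributions in the variable a, equals π δ_0(a) − sin(ta)/a. Concretely, for every Schwartz function φ on ℝ, lim_{ε→0+} ∫_ℝ (∫_t^∞ cos(ar) e^{-εr} dr) φ(a) da = π φ(0) − ∫_ℝ (sin(ta)/a) φ(a) da. -/
/-!
For `ε > 0` the inner integral is the real part of `∫_t^∞ e^{(-ε + ia) r} dr`, which equals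
`e^{-εt} (ε cos(at) - a sin(at)) / (ε² + a²)`. Against `φ`, the first term is the Poisson kernel
`ε / (ε² + a²)`, an approximate identity of total mass `π` (substitute `a = εx`), so it contributes
`π φ(0)`. The second term is dominated by `|t| |φ(a)|` and tends pointwise to `sin(ta)/a · φ(a)`,
and `e^{-εt} → 1`.
-/

open MeasureTheory Filter Topology Real

lemma cos_mul_mul_exp_eq_re (a ε r : ℝ) :
    cos (a * r) * exp (-ε * r) = RCLike.re (Complex.exp ((-ε + a * Complex.I) * r)) := by
  simp [Complex.exp_re, mul_comm]

theorem integral_Ioi_cos_mul_mul_exp_neg {ε : ℝ} (hε : 0 < ε) (a t : ℝ) :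
    ∫ r in Set.Ioi t, cos (a * r) * exp (-ε * r) =
      exp (-ε * t) * (ε * cos (a * t) - a * sin (a * t)) / (ε ^ 2 + a ^ 2) := by
  have hre : (-ε + a * Complex.I).re < 0 := by simpa using hε
  simp_rw [cos_mul_mul_exp_eq_re]
  rw [integral_re (integrableOn_exp_mul_complex_Ioi hre t), integral_exp_mul_complex_Ioi hre t,
    RCLike.re_to_complex, Complex.div_re]
  simp only [Complex.neg_re, Complex.exp_re, Complex.mul_re, Complex.add_re, Complex.ofReal_re,
    Complex.I_re, mul_zero, Complex.ofReal_im, Complex.I_im, mul_one, sub_self, add_zero, neg_mul,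
    Complex.add_im, Complex.neg_im, neg_zero, Complex.mul_im, zero_add, sub_zero, mul_neg, neg_neg,
    Complex.normSq_apply, Complex.exp_im]
  field_simp
  ring

lemma abs_div_sq_add_sq_le_inv {ε : ℝ} (hε : 0 < ε) (a : ℝ) : |ε / (ε ^ 2 + a ^ 2)| ≤ ε⁻¹ := by
  rw [abs_of_nonneg (by positivity), div_le_iff₀ (by positivity)]
  field_simp
  nlinarith [sq_nonneg a]

lemma abs_mul_sin_div_sq_add_sq_le (ε a t : ℝ) :
    |a * sin (a * t) / (ε ^ 2 + a ^ 2)| ≤ |t| := by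
  rw [abs_div, abs_of_nonneg (by positivity : 0 ≤ ε ^ 2 + a ^ 2)]
  refine div_le_of_le_mul₀ (by positivity) (abs_nonneg t) ?_
  calc |a * sin (a * t)| ≤ |a| * |a * t| := by
        rw [abs_mul]; exact mul_le_mul_of_nonneg_left abs_sin_le_abs (abs_nonneg a)
    _ = a ^ 2 * |t| := by rw [abs_mul, ← mul_assoc, abs_mul_abs_self, sq]
    _ ≤ |t| * (ε ^ 2 + a ^ 2) := by nlinarith [abs_nonneg t, sq_nonneg ε]

lemma integral_div_sq_add_sq_mul_eq {ε : ℝ} (hε : 0 < ε) (ψ : ℝ → ℝ) :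
    ∫ a, ε / (ε ^ 2 + a ^ 2) * ψ a = ∫ x, ψ (ε * x) / (1 + x ^ 2) :=
  calc ∫ a, ε / (ε ^ 2 + a ^ 2) * ψ a
      = ε * |ε⁻¹| • ∫ a, ε / (ε ^ 2 + a ^ 2) * ψ a := by
        rw [abs_of_pos (inv_pos.2 hε), smul_eq_mul, mul_inv_cancel_left₀ hε.ne']
    _ = ε * ∫ x, ε / (ε ^ 2 + (ε * x) ^ 2) * ψ (ε * x) := by
        rw [Measure.integral_comp_mul_left (fun a => ε / (ε ^ 2 + a ^ 2) * ψ a)]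
    _ = ∫ x, ψ (ε * x) / (1 + x ^ 2) := by
        rw [← integral_const_mul]
        congr with x
        field_simp

theorem tendsto_integral_div_sq_add_sq_mul {ψ : ℝ → ℝ} (hψ : Continuous ψ) {C : ℝ}
    (hC : ∀ x, |ψ x| ≤ C) :
    Tendsto (fun ε => ∫ a, ε / (ε ^ 2 + a ^ 2) * ψ a) (𝓝[>] 0) (𝓝 (π * ψ 0)) := by
  have hlim : Tendsto (fun ε => ∫ x, ψ (ε * x) / (1 + x ^ 2)) (𝓝[>] 0)
      (𝓝 (∫ x, ψ (0 * x) / (1 + x ^ 2))) := by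
    refine tendsto_integral_filter_of_dominated_convergence (fun x => C * (1 + x ^ 2)⁻¹)
      (.of_forall fun ε => ?_) (.of_forall fun ε => .of_forall fun x => ?_)
      (integrable_inv_one_add_sq.const_mul C) (.of_forall fun x => ?_)
    · exact (Continuous.div (by fun_prop) (by fun_prop) fun x => by positivity).aestronglyMeasurable
    · rw [norm_div, Real.norm_of_nonneg (by positivity : (0 : ℝ) ≤ 1 + x ^ 2), div_eq_mul_inv]
      exact mul_le_mul_of_nonneg_right (hC _) (by positivity)
    · exact ((by fun_prop : Continuous fun ε => ψ (ε * x) / (1 + x ^ 2)).tendsto 0).mono_left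
        nhdsWithin_le_nhds
  have hval : ∫ x, ψ (0 * x) / (1 + x ^ 2) = π * ψ 0 := by
    simp_rw [zero_mul, div_eq_mul_inv, integral_const_mul, integral_univ_inv_one_add_sq, mul_comm]
  rw [hval] at hlim
  exact hlim.congr' (eventually_mem_nhdsWithin.mono fun ε hε =>
    (integral_div_sq_add_sq_mul_eq hε ψ).symm)

theorem tendsto_integral_mul_sin_div_sq_add_sq {φ : ℝ → ℝ} (hφ : Integrable φ) (t : ℝ) :
    Tendsto (fun ε => ∫ a, a * sin (a * t) / (ε ^ 2 + a ^ 2) * φ a) (𝓝[>] 0)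
      (𝓝 (∫ a, (if a = 0 then t else sin (t * a) / a) * φ a)) := by
  refine tendsto_integral_filter_of_dominated_convergence (fun a => |t| * ‖φ a‖)
    (.of_forall fun ε => ?_) (.of_forall fun ε => .of_forall fun a => ?_) (hφ.norm.const_mul _) ?_
  · exact (Measurable.aestronglyMeasurable (by fun_prop)).mul hφ.aestronglyMeasurable
  · rw [norm_mul, Real.norm_eq_abs]
    exact mul_le_mul_of_nonneg_right (abs_mul_sin_div_sq_add_sq_le ε a t) (norm_nonneg _)
  · filter_upwards [compl_mem_ae_iff.2 (measure_singleton (0 : ℝ))] with a (ha : a ≠ 0)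
    have hcont : ContinuousAt (fun ε : ℝ => a * sin (a * t) / (ε ^ 2 + a ^ 2) * φ a) 0 :=
      (continuousAt_const.div (by fun_prop) (by simpa using ha)).mul continuousAt_const
    convert hcont.tendsto.mono_left nhdsWithin_le_nhds using 2
    rw [if_neg ha, mul_comm t a]
    field_simp
    ring

theorem tendsto_integral_integral_Ioi_cos_mul_mul_exp_neg {φ : ℝ → ℝ} (hφc : Continuous φ)
    (hφi : Integrable φ) {C : ℝ} (hC : ∀ a, |φ a| ≤ C) (t : ℝ) :
    Tendsto (fun ε => ∫ a, (∫ r in Set.Ioi t, cos (a * r) * exp (-ε * r)) * φ a) (𝓝[>] 0)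
      (𝓝 (π * φ 0 - ∫ a, (if a = 0 then t else sin (t * a) / a) * φ a)) := by
  set ψ : ℝ → ℝ := fun a => cos (a * t) * φ a
  have hψ_int : Integrable ψ := hφi.bdd_mul (c := 1) (by fun_prop)
    (.of_forall fun a => by simpa using abs_cos_le_one (a * t))
  have hψ_le (a : ℝ) : |ψ a| ≤ C := by
    rw [abs_mul]
    exact (mul_le_of_le_one_left (abs_nonneg _) (abs_cos_le_one _)).trans (hC a)
  have hexp : Tendsto (fun ε => exp (-ε * t)) (𝓝[>] 0) (𝓝 1) := by
    simpa using ((by fun_prop : Continuous fun ε => exp (-ε * t)).tendsto 0).mono_left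
      nhdsWithin_le_nhds
  have hlim := hexp.mul ((tendsto_integral_div_sq_add_sq_mul (by fun_prop) hψ_le).sub
    (tendsto_integral_mul_sin_div_sq_add_sq hφi t))
  simp only [ψ, zero_mul, cos_zero, one_mul] at hlim
  refine hlim.congr' (eventually_mem_nhdsWithin.mono fun ε (hε : 0 < ε) => ?_)
  have hP : Integrable fun a => ε / (ε ^ 2 + a ^ 2) * ψ a :=
    hψ_int.bdd_mul (Measurable.aestronglyMeasurable (by fun_prop))
      (.of_forall (abs_div_sq_add_sq_le_inv hε))
  have hS : Integrable fun a => a * sin (a * t) / (ε ^ 2 + a ^ 2) * φ a :=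
    hφi.bdd_mul (Measurable.aestronglyMeasurable (by fun_prop))
      (.of_forall fun a => abs_mul_sin_div_sq_add_sq_le ε a t)
  rw [← integral_sub hP hS, ← integral_const_mul]
  congr with a
  rw [integral_Ioi_cos_mul_mul_exp_neg hε]
  simp only [ψ]
  field_simp

/-- The distributional limit as ε → 0+ of ∫_t^∞ cos(ar) e^{-εr} dr equals
π δ₀(a) − sin(ta)/a, tested against any Schwartz function φ. -/
theorem cos_exp_limit_distribution (t : ℝ) (φ : SchwartzMap ℝ ℝ) :
    Tendsto (fun ε : ℝ =>
        ∫ a : ℝ, (∫ r in Set.Ioi t, Real.cos (a * r) * Real.exp (-ε * r)) * φ a)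
      (𝓝[>] 0)
      (𝓝 (Real.pi * φ 0 - ∫ a : ℝ, (if a = 0 then t else Real.sin (t * a) / a) * φ a)) :=
  tendsto_integral_integral_Ioi_cos_mul_mul_exp_neg φ.continuous φ.integrable
    (φ.toBoundedContinuousFunction.norm_coe_le_norm) t
end

section
/- The Fourier transform (convention F[f](ξ) = ∫ f(x)e^{-ixξ}dx, distributionally) of φ_1(z) = z j_1(z) = sin z/z − cos z equals π[χ_{(−1,1)}(ξ) − δ_{−1}(ξ) − δ_1(ξ)], i.e. for every Schwartz function ψ, ⟨F[φ_1], ψ⟩ = π(∫_{−1}^1 ψ(ξ)dξ − ψ(−1) − ψ(1)). -/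
open MeasureTheory Real

/-- φ₁(z) = z j₁(z) = sin z / z − cos z, with value 0 at z = 0. -/
noncomputable def phiOne (z : ℝ) : ℝ :=
  if z = 0 then 0 else Real.sin z / z - Real.cos z

open FourierTransform in
lemma phiOne_inner_eq (ψ : SchwartzMap ℝ ℂ) (z : ℝ) :
    (∫ ξ : ℝ, ψ ξ * Complex.exp (-Complex.I * z * ξ)) = 𝓕 (⇑ψ) (z / (2*π)) := by
  rw [Real.fourier_real_eq_integral_exp_smul]
  congr 1 with ξ
  rw [smul_eq_mul, mul_comm]
  congr 1
  push_cast
  have h2 : (2*(π:ℂ)) ≠ 0 := by simpa using Real.pi_ne_zero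
  have hz : (2*(π:ℂ)) * ((z:ℂ)/(2*π)) = z := mul_div_cancel₀ _ h2
  rw [show (-2*(π:ℂ)*ξ*((z:ℂ)/(2*π))*Complex.I)
      = -Complex.I * ((2*(π:ℂ)) * ((z:ℂ)/(2*π))) * ξ from by ring, hz]

lemma phiOne_eq_integral (z : ℝ) :
    (phiOne z : ℂ) = (1/2) * (∫ ξ in (-1:ℝ)..1, Complex.exp (Complex.I * z * ξ))
      - Complex.cos z := by
  by_cases hz : z = 0
  · subst hz
    norm_num [phiOne]
  · have hc : (Complex.I * z) ≠ 0 := by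
      simp [Complex.I_ne_zero, Complex.ofReal_eq_zero, hz]
    have : (∫ ξ in (-1:ℝ)..1, Complex.exp (Complex.I * z * ξ))
        = (Complex.exp (Complex.I * z) - Complex.exp (-(Complex.I * z))) / (Complex.I * z) := by
      have := integral_exp_mul_complex (a := (-1:ℝ)) (b := 1) hc
      simpa [mul_assoc, mul_comm, mul_left_comm] using this
    rw [this]
    rw [phiOne, if_neg hz]
    push_cast
    rw [Complex.sin, Complex.cos]
    have hz' : (z:ℂ) ≠ 0 := by exact_mod_cast hz
    field_simp
    ring_nf
    simp [Complex.I_sq]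
    ring

open FourierTransform in
lemma inversion_exp (ψ : SchwartzMap ℝ ℂ) (ξ : ℝ) :
    (∫ w : ℝ, Complex.exp (Complex.I * ((2*π*w : ℝ) : ℂ) * (ξ : ℂ)) * 𝓕 (⇑ψ) w) = ψ ξ := by
  have hFint : Integrable (𝓕 (⇑ψ)) := by
    have := (SchwartzMap.fourierTransformCLM ℂ ψ).integrable (μ := volume)
    simpa [SchwartzMap.fourier_coe] using this
  have hinv : 𝓕⁻ (𝓕 (⇑ψ)) = ⇑ψ :=
    Continuous.fourierInv_fourier_eq ψ.continuous ψ.integrable hFint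
  have h1 : 𝓕⁻ (𝓕 (⇑ψ)) ξ = 𝓕 (𝓕 (⇑ψ)) (-ξ) :=
    Real.fourierInv_eq_fourier_neg _ _
  rw [Real.fourier_real_eq_integral_exp_smul] at h1
  rw [show ψ ξ = 𝓕⁻ (𝓕 (⇑ψ)) ξ by rw [hinv], h1]
  congr 1 with w
  rw [smul_eq_mul]
  congr 2
  push_cast
  ring

open FourierTransform in
/-- The distributional Fourier transform of φ₁ is π[χ_{(−1,1)} − δ_{−1} − δ_1]:
for every Schwartz ψ, ⟨F[φ₁], ψ⟩ = ⟨φ₁, F[ψ]⟩ = π(∫_{−1}^1 ψ − ψ(−1) − ψ(1)). -/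
theorem fourier_phiOne (ψ : SchwartzMap ℝ ℂ) :
    (∫ z : ℝ, (phiOne z : ℂ) * ∫ ξ : ℝ, ψ ξ * Complex.exp (-Complex.I * z * ξ))
      = (Real.pi : ℂ) * ((∫ ξ in (-1 : ℝ)..1, ψ ξ) - ψ (-1) - ψ 1) := by
  set F : ℝ → ℂ := 𝓕 (⇑ψ) with hF
  have hFint : Integrable F := by
    have := (SchwartzMap.fourierTransformCLM ℂ ψ).integrable (μ := volume)
    simpa [hF, SchwartzMap.fourier_coe] using this
  have hFcont : Continuous F := by
    have := (SchwartzMap.fourierTransformCLM ℂ ψ).continuous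
    simpa [hF, SchwartzMap.fourier_coe] using this
  -- step 1: rewrite inner integral
  have step1 : (∫ z : ℝ, (phiOne z : ℂ) * ∫ ξ : ℝ, ψ ξ * Complex.exp (-Complex.I * z * ξ))
      = ∫ z : ℝ, (phiOne z : ℂ) * F (z / (2*π)) := by
    congr 1 with z
    rw [phiOne_inner_eq ψ z]
  -- step 2: change of variables z = 2π w
  have h2pi : (2*π : ℝ) ≠ 0 := by positivity
  have step2 : (∫ z : ℝ, (phiOne z : ℂ) * F (z / (2*π)))
      = (2*π : ℝ) • ∫ w : ℝ, (phiOne (2*π*w) : ℂ) * F w := by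
    have this1 := MeasureTheory.Measure.integral_comp_mul_left
      (fun z : ℝ => (phiOne z : ℂ) * F (z / (2*π))) (2*π)
    have key : (∫ w : ℝ, (phiOne (2*π*w) : ℂ) * F w)
        = ∫ x : ℝ, (phiOne (2*π*x) : ℂ) * F (2*π*x/(2*π)) := by
      congr 1 with w
      rw [mul_div_cancel_left₀ _ h2pi]
    rw [key, this1, abs_of_pos (by positivity : (0:ℝ) < (2*π)⁻¹), smul_smul,
      mul_inv_cancel₀ h2pi, one_smul]
  -- integrability of exp-modulated F
  have hexp_int : ∀ ξ : ℝ, Integrable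
      (fun w : ℝ => Complex.exp (Complex.I * ((2*π*w : ℝ) : ℂ) * (ξ : ℂ)) * F w) := by
    intro ξ
    refine hFint.bdd_mul (c := 1) ?_ (Filter.Eventually.of_forall fun w => ?_)
    · refine (Complex.continuous_exp.comp ?_).aestronglyMeasurable
      exact (continuous_const.mul (Complex.continuous_ofReal.comp
        (continuous_const.mul continuous_id))).mul continuous_const
    · rw [Complex.norm_exp]
      simp [Complex.mul_re]
  -- definition of S
  set S : ℝ → ℂ := fun w => ∫ ξ in (-1:ℝ)..1, Complex.exp (Complex.I * ((2*π*w : ℝ) : ℂ) * ξ)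
    with hS
  have hSbdd : ∀ w, ‖S w‖ ≤ 2 := by
    intro w
    have h : ‖S w‖ ≤ 1 * |(1:ℝ) - (-1)| := by
      apply intervalIntegral.norm_integral_le_of_norm_le_const
      intro x _
      rw [Complex.norm_exp]
      simp [Complex.mul_re]
    norm_num at h
    exact h
  have hSmeas : AEStronglyMeasurable S volume := by
    have hφmeas : Measurable phiOne := by
      unfold phiOne
      exact Measurable.ite (measurableSet_eq)
        measurable_const
        ((Real.continuous_sin.measurable.div measurable_id).sub
          Real.continuous_cos.measurable)
    have hSeq : S = fun w => 2 * (((phiOne (2*π*w) : ℝ) : ℂ) + Complex.cos ((2*π*w : ℝ) : ℂ)) := by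
      funext w
      have h := phiOne_eq_integral (2*π*w)
      simp only [hS]
      -- solve for the integral
      have : (∫ ξ in (-1:ℝ)..1, Complex.exp (Complex.I * ((2*π*w : ℝ) : ℂ) * ξ))
          = 2 * (((phiOne (2*π*w) : ℝ) : ℂ) + Complex.cos ((2*π*w : ℝ) : ℂ)) := by
        rw [h]; ring
      exact this
    rw [hSeq]
    apply Measurable.aestronglyMeasurable
    apply Measurable.const_mul
    exact (Complex.measurable_ofReal.comp (hφmeas.comp (measurable_const_mul _))).add
      ((Complex.continuous_cos.measurable).comp
        (Complex.measurable_ofReal.comp (measurable_const_mul _)))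
  have hSF_int : Integrable (fun w => S w * F w) :=
    hFint.bdd_mul hSmeas (Filter.Eventually.of_forall hSbdd)
  have hcosF_int : Integrable (fun w => Complex.cos ((2*π*w : ℝ) : ℂ) * F w) := by
    refine hFint.bdd_mul (c := 1) ?_ (Filter.Eventually.of_forall fun w => ?_)
    · refine (Complex.continuous_cos.comp ?_).aestronglyMeasurable
      exact Complex.continuous_ofReal.comp (continuous_const.mul continuous_id)
    · have : Complex.cos ((2*π*w : ℝ) : ℂ) = ((Real.cos (2*π*w) : ℝ) : ℂ) := by
        rw [Complex.ofReal_cos]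
      rw [this, Complex.norm_real]
      exact abs_cos_le_one _
  -- step 3: decompose phiOne
  have step3 : (∫ w : ℝ, (phiOne (2*π*w) : ℂ) * F w)
      = (1/2) * (∫ w : ℝ, S w * F w) - ∫ w : ℝ, Complex.cos ((2*π*w : ℝ) : ℂ) * F w := by
    have : ∀ w : ℝ, (phiOne (2*π*w) : ℂ) * F w
        = (1/2) * (S w * F w) - Complex.cos ((2*π*w : ℝ) : ℂ) * F w := by
      intro w
      rw [phiOne_eq_integral (2*π*w), hS]
      ring
    simp_rw [this]
    rw [integral_sub (hSF_int.const_mul _) hcosF_int, integral_const_mul]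
  -- step 4: Fubini for the S-term
  have step4 : (∫ w : ℝ, S w * F w) = ∫ ξ in (-1:ℝ)..1, ψ ξ := by
    have hle : (-1:ℝ) ≤ 1 := by norm_num
    have e1 : ∀ w, S w * F w
        = ∫ ξ in Set.Ioc (-1:ℝ) 1, Complex.exp (Complex.I * ((2*π*w : ℝ) : ℂ) * ξ) * F w := by
      intro w
      simp only [hS]
      rw [intervalIntegral.integral_of_le hle, ← integral_mul_const]
    simp_rw [e1]
    have hprod : Integrable (Function.uncurry fun (w ξ : ℝ) =>
        Complex.exp (Complex.I * ((2*π*w : ℝ) : ℂ) * ξ) * F w)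
        (volume.prod (volume.restrict (Set.Ioc (-1:ℝ) 1))) := by
      have hmeas : AEStronglyMeasurable (Function.uncurry fun (w ξ : ℝ) =>
          Complex.exp (Complex.I * ((2*π*w : ℝ) : ℂ) * ξ) * F w)
          (volume.prod (volume.restrict (Set.Ioc (-1:ℝ) 1))) := by
        apply Continuous.aestronglyMeasurable
        apply Continuous.mul
        · refine Complex.continuous_exp.comp ?_
          exact ((continuous_const.mul (Complex.continuous_ofReal.comp
            (continuous_const.mul continuous_fst))).mul
            (Complex.continuous_ofReal.comp continuous_snd))
        · exact hFcont.comp continuous_fst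
      have hdom : Integrable (fun p : ℝ × ℝ => ‖F p.1‖ * (1:ℝ))
          (volume.prod (volume.restrict (Set.Ioc (-1:ℝ) 1))) := by
        have hconst : Integrable (fun _ : ℝ => (1:ℝ)) (volume.restrict (Set.Ioc (-1:ℝ) 1)) := by
          exact integrableOn_const measure_Ioc_lt_top.ne
        exact hFint.norm.mul_prod hconst
      refine hdom.mono' hmeas ?_
      filter_upwards with p
      rw [Function.uncurry]
      rw [norm_mul, Complex.norm_exp]
      simp [Complex.mul_re]
    rw [MeasureTheory.integral_integral_swap hprod]
    rw [intervalIntegral.integral_of_le hle]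
    apply setIntegral_congr_fun measurableSet_Ioc
    intro ξ _
    exact inversion_exp ψ ξ
  -- step 5: the cosine term
  have step5 : (∫ w : ℝ, Complex.cos ((2*π*w : ℝ) : ℂ) * F w) = (1/2) * (ψ 1 + ψ (-1)) := by
    have e2 : ∀ w : ℝ, Complex.cos ((2*π*w : ℝ) : ℂ) * F w
        = (1/2) * (Complex.exp (Complex.I * ((2*π*w : ℝ) : ℂ) * ((1:ℝ) : ℂ)) * F w)
          + (1/2) * (Complex.exp (Complex.I * ((2*π*w : ℝ) : ℂ) * ((-1:ℝ) : ℂ)) * F w) := by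
      intro w
      rw [Complex.cos]
      push_cast
      ring_nf
    simp_rw [e2]
    rw [integral_add ((hexp_int 1).const_mul _) ((hexp_int (-1)).const_mul _),
      integral_const_mul, integral_const_mul, inversion_exp ψ 1, inversion_exp ψ (-1)]
    ring
  rw [step1, step2, step3, step4, step5]
  rw [Complex.real_smul]
  push_cast
  ring
end

section
/- The distributional Fourier transform of φ_2(z) = z j_2(z) = (3/z² − 1) sin z − (3/z) cos z equals π i [−3ξ χ_{(−1,1)}(ξ) − δ_{−1}(ξ) + δ_1(ξ)]; i.e. for every Schwartz ψ, ⟨F[φ_2], ψ⟩ = π i(−3∫_{−1}^1 ξ ψ(ξ) dξ − ψ(−1) + ψ(1)). -/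
/-!
For `z ≠ 0`, `∫_{-1}^1 t e^{izt} dt = 2i (sin z - z cos z) / z²`, hence
`φ₂(z) = ∫ e^{izt} dμ(t)` for the complex measure `μ = (i/2)(δ₁ - δ₋₁) - (3i/2) t 𝟙_{(-1,1)}(t) dt`.
Pairing with `F[ψ]`, which is integrable, and exchanging the two integrals, each term reduces to
the inversion formula `∫ e^{iza} F[ψ](z) dz = 2π ψ(a)`.
-/

open MeasureTheory Real

/-- φ₂(z) = z j₂(z) = (3/z² − 1) sin z − (3/z) cos z, with value 0 at z = 0. -/
noncomputable def phiTwo (z : ℝ) : ℝ :=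
  if z = 0 then 0 else (3 / z ^ 2 - 1) * Real.sin z - (3 / z) * Real.cos z

open Complex (I)
open scoped Complex FourierTransform

noncomputable def angularFourier (f : ℝ → ℂ) (z : ℝ) : ℂ :=
  ∫ ξ : ℝ, f ξ * cexp (-I * z * ξ)

theorem angularFourier_eq_fourier (f : ℝ → ℂ) (z : ℝ) :
    angularFourier f z = 𝓕 f (z / (2 * π)) := by
  rw [Real.fourier_real_eq_integral_exp_smul, angularFourier]
  congr 1 with ξ
  rw [smul_eq_mul, mul_comm]
  congr 2
  push_cast
  field_simp

theorem integrable_angularFourier {f : ℝ → ℂ} (hf : Integrable (𝓕 f)) :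
    Integrable (angularFourier f) := by
  simpa only [funext (angularFourier_eq_fourier f)] using hf.comp_div (by positivity)

theorem integral_cexp_mul_angularFourier {f : ℝ → ℂ} (hf : Continuous f) (hfi : Integrable f)
    (hFi : Integrable (𝓕 f)) (a : ℝ) :
    ∫ z : ℝ, cexp (I * z * a) * angularFourier f z = 2 * π * f a := by
  calc ∫ z : ℝ, cexp (I * z * a) * angularFourier f z
      = ∫ z : ℝ, (fun w : ℝ => cexp (I * (2 * π * w) * a) * 𝓕 f w) (z / (2 * π)) := by
        congr 1 with z
        rw [angularFourier_eq_fourier]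
        push_cast
        field_simp
    _ = 2 * π * 𝓕⁻ (𝓕 f) a := by
        rw [Measure.integral_comp_div (fun w : ℝ => cexp (I * (2 * π * w) * a) * 𝓕 f w),
          Real.fourierInv_eq', abs_of_pos Real.two_pi_pos,
          Complex.real_smul, Complex.ofReal_mul, Complex.ofReal_ofNat]
        congr 2 with w
        simp only [smul_eq_mul, RCLike.inner_apply, conj_trivial]
        push_cast
        ring_nf
    _ = 2 * π * f a := by rw [hf.fourierInv_fourier_eq hfi hFi]

theorem integral_ofReal_mul_cexp_mul {c : ℂ} (hc : c ≠ 0) (a b : ℝ) :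
    ∫ t in a..b, (t : ℂ) * cexp (c * t)
      = cexp (c * b) * (b / c - 1 / c ^ 2) - cexp (c * a) * (a / c - 1 / c ^ 2) := by
  refine intervalIntegral.integral_eq_sub_of_hasDerivAt
    (f := fun s : ℝ => cexp (c * s) * (s / c - 1 / c ^ 2)) (fun t _ => ?_)
    ((by fun_prop : Continuous fun t : ℝ => (t : ℂ) * cexp (c * t)).intervalIntegrable _ _)
  have hexp : HasDerivAt (fun s : ℂ => cexp (c * s)) (cexp (c * t) * c) t :=
    ((hasDerivAt_id _).const_mul c).cexp.congr_deriv (by simp)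
  have hlin : HasDerivAt (fun s : ℂ => s / c - 1 / c ^ 2) (1 / c) t := by
    simpa using ((hasDerivAt_id (t : ℂ)).div_const c).sub_const (1 / c ^ 2)
  refine ((hexp.mul hlin).comp_ofReal).congr_deriv ?_
  field_simp
  ring

theorem norm_cexp_I_mul_ofReal_mul_ofReal (x y : ℝ) : ‖cexp (I * x * y)‖ = 1 := by
  rw [show I * x * y = ((x * y : ℝ) : ℂ) * I by push_cast; ring, Complex.norm_exp_ofReal_mul_I]

theorem integrable_cexp_mul {g : ℝ → ℂ} (hg : Integrable g) (a : ℝ) :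
    Integrable fun z : ℝ => cexp (I * z * a) * g z :=
  hg.bdd_mul (c := 1) (by fun_prop)
    (.of_forall fun z => (norm_cexp_I_mul_ofReal_mul_ofReal z a).le)

section Fubini

variable {ν : Measure ℝ} {h g : ℝ → ℂ}

theorem integrable_mul_cexp_mul_prod (hh : Integrable h ν) (hg : Integrable g) :
    Integrable (fun p : ℝ × ℝ => h p.2 * cexp (I * p.1 * p.2) * g p.1) (volume.prod ν) := by
  refine ((hg.mul_prod hh).bdd_mul (f := fun p : ℝ × ℝ => cexp (I * p.1 * p.2)) (c := 1)
    (by fun_prop) (.of_forall fun p => (norm_cexp_I_mul_ofReal_mul_ofReal p.1 p.2).le)).congr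
    (.of_forall fun p => by ring)

theorem integrable_integral_mul_cexp_mul [SFinite ν] (hh : Integrable h ν) (hg : Integrable g) :
    Integrable fun z : ℝ => (∫ t, h t * cexp (I * z * t) ∂ν) * g z := by
  simpa only [integral_mul_const] using (integrable_mul_cexp_mul_prod hh hg).integral_prod_left

theorem integral_integral_mul_cexp_mul_swap [SFinite ν] (hh : Integrable h ν)
    (hg : Integrable g) :
    ∫ z : ℝ, (∫ t, h t * cexp (I * z * t) ∂ν) * g z
      = ∫ t, h t * (∫ z : ℝ, cexp (I * z * t) * g z) ∂ν := by
  calc ∫ z : ℝ, (∫ t, h t * cexp (I * z * t) ∂ν) * g z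
      = ∫ z : ℝ, ∫ t, h t * cexp (I * z * t) * g z ∂ν := by simp only [integral_mul_const]
    _ = ∫ t, (∫ z : ℝ, h t * cexp (I * z * t) * g z) ∂ν :=
        integral_integral_swap (f := fun (z t : ℝ) => h t * cexp (I * z * t) * g z)
          (integrable_mul_cexp_mul_prod hh hg)
    _ = ∫ t, h t * (∫ z : ℝ, cexp (I * z * t) * g z) ∂ν := by
        simp only [mul_assoc, integral_const_mul]

end Fubini

theorem phiTwo_eq_integral (z : ℝ) :
    (phiTwo z : ℂ) = I / 2 * (cexp (I * z) - cexp (-(I * z)))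
      - 3 * I / 2 * ∫ t in (-1 : ℝ)..1, (t : ℂ) * cexp (I * z * t) := by
  rcases eq_or_ne z 0 with rfl | hz
  · simp only [phiTwo, if_pos, Complex.ofReal_zero, mul_zero, zero_mul, Complex.exp_zero,
      neg_zero, sub_self, mul_one]
    rw [intervalIntegral.integral_ofReal, integral_id]
    norm_num
  have hz' : (z : ℂ) ≠ 0 := Complex.ofReal_ne_zero.2 hz
  rw [integral_ofReal_mul_cexp_mul (mul_ne_zero Complex.I_ne_zero hz'), phiTwo, if_neg hz]
  push_cast
  rw [Complex.sin, Complex.cos, show (z : ℂ) * I = I * z by ring,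
    show -(z : ℂ) * I = -(I * z) by ring, mul_one, mul_neg_one]
  field_simp
  ring_nf
  rw [Complex.I_sq]
  ring

theorem integral_phiTwo_mul {g : ℝ → ℂ} (hg : Integrable g) :
    ∫ z : ℝ, (phiTwo z : ℂ) * g z
      = I / 2 * ((∫ z : ℝ, cexp (I * z * (1 : ℝ)) * g z)
          - ∫ z : ℝ, cexp (I * z * (-1 : ℝ)) * g z)
        - 3 * I / 2 * ∫ t in (-1 : ℝ)..1, (t : ℂ) * ∫ z : ℝ, cexp (I * z * t) * g z := by
  simp only [phiTwo_eq_integral,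
    intervalIntegral.integral_of_le (show (-1 : ℝ) ≤ 1 by norm_num)]
  set ν := volume.restrict (Set.Ioc (-1 : ℝ) 1)
  have hid : Integrable (fun t : ℝ => (t : ℂ)) ν := Complex.continuous_ofReal.integrableOn_Ioc
  have hplus := (integrable_cexp_mul hg 1).const_mul (I / 2)
  have hminus := (integrable_cexp_mul hg (-1)).const_mul (I / 2)
  have hK := (integrable_integral_mul_cexp_mul hid hg).const_mul (3 * I / 2)
  calc ∫ z : ℝ, (I / 2 * (cexp (I * z) - cexp (-(I * z)))
          - 3 * I / 2 * ∫ t, (t : ℂ) * cexp (I * z * t) ∂ν) * g z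
      = ∫ z : ℝ, (I / 2 * (cexp (I * z * (1 : ℝ)) * g z)
          - I / 2 * (cexp (I * z * (-1 : ℝ)) * g z)
          - 3 * I / 2 * ((∫ t, (t : ℂ) * cexp (I * z * t) ∂ν) * g z)) := by
        congr 1 with z
        push_cast
        ring_nf
    _ = _ := by
        rw [integral_sub (hplus.sub' hminus) hK, integral_sub hplus hminus, integral_const_mul,
          integral_const_mul, integral_const_mul, integral_integral_mul_cexp_mul_swap hid hg]
        ring

/-- The distributional Fourier transform of φ₂ is π i[−3ξ χ_{(−1,1)}(ξ) − δ_{−1} + δ_1]: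
for every Schwartz ψ, ⟨F[φ₂], ψ⟩ = π i(−3∫_{−1}^1 ξ ψ(ξ) dξ − ψ(−1) + ψ(1)). -/
theorem fourier_phiTwo (ψ : SchwartzMap ℝ ℂ) :
    (∫ z : ℝ, (phiTwo z : ℂ) * ∫ ξ : ℝ, ψ ξ * Complex.exp (-Complex.I * z * ξ))
      = (Real.pi : ℂ) * Complex.I *
          (-3 * (∫ ξ in (-1 : ℝ)..1, (ξ : ℂ) * ψ ξ) - ψ (-1) + ψ 1) := by
  change ∫ z : ℝ, (phiTwo z : ℂ) * angularFourier ψ z = _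
  have inversion (a : ℝ) : ∫ z : ℝ, cexp (I * z * a) * angularFourier ψ z = 2 * π * ψ a :=
    integral_cexp_mul_angularFourier ψ.continuous ψ.integrable (𝓕 ψ).integrable a
  rw [integral_phiTwo_mul (integrable_angularFourier (𝓕 ψ).integrable)]
  simp only [inversion, mul_left_comm (_ : ℂ) (2 * (π : ℂ)),
    intervalIntegral.integral_const_mul]
  ring
end

section
/- Fix an integer k ≥ 1 and a real parameter d with d ∉ {2, 4, …, 4k}. With c_j = ∏_{ℓ=1}^k (d − 2j − 2ℓ) / ∏_{1 ≤ ℓ ≤ k, ℓ ≠ j} (2ℓ − 2j), one has ∑_{j=1}^k c_j/(2j) + 1 = ∏_{ℓ=1}^k (d − 2ℓ)/(2ℓ). -/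
/-!
Take the nodes `-2i`, `0 ≤ i ≤ k`, and the monic polynomial `P(x) = ∏_{ℓ=1}^k (x + d - 2ℓ)` of
degree `k`. Its leading coefficient `1` is the divided difference of `P` at the `k + 1` nodes,
i.e. `∑_i P(-2i) / ∏_{j ≠ i} (2j - 2i)`. The node `0` contributes `∏ (d - 2ℓ)/(2ℓ)` and the node
`-2j` contributes `-c_j/(2j)`.
-/

open Finset Polynomial

/-- The leading coefficient of the monic polynomial `∏_{l ∈ t} (X - w l)`, computed as a divided
difference at `#t + 1` distinct nodes. -/
theorem Lagrange.sum_prod_sub_div_prod_sub_eq_one {F ι κ : Type*} [Field F] [DecidableEq ι]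
    {s : Finset ι} {v : ι → F} (hvs : Set.InjOn v s) (t : Finset κ) (w : κ → F)
    (hst : #s = #t + 1) :
    ∑ i ∈ s, (∏ l ∈ t, (v i - w l)) / ∏ j ∈ s.erase i, (v i - v j) = 1 := by
  have hdeg : #s = (nodal t w).degree + 1 := by rw [degree_nodal, hst]; norm_cast
  simpa only [eval_nodal, nodal_monic.leadingCoeff, eq_comm] using leadingCoeff_eq_sum hvs hdeg

theorem cauchy_coeff_sum_prod_general (k : ℕ) (d : ℝ) :
    (∑ j ∈ Finset.Icc 1 k,
        ((∏ l ∈ Finset.Icc 1 k, (d - 2 * j - 2 * l)) /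
            (∏ l ∈ (Finset.Icc 1 k).erase j, ((2 * l : ℝ) - 2 * j))) / (2 * (j : ℝ))) + 1
      = ∏ l ∈ Finset.Icc 1 k, (d - 2 * l) / (2 * (l : ℝ)) := by
  have hinj : Set.InjOn (fun i : ℕ => -2 * (i : ℝ)) (Icc 0 k) := fun i _ j _ h => by
    simpa using h
  have key := Lagrange.sum_prod_sub_div_prod_sub_eq_one hinj (Icc 1 k) (fun l => 2 * l - d)
    (by simp)
  rw [← insert_Icc_add_one_left_eq_Icc (Nat.zero_le k), zero_add, sum_insert (by simp)] at key
  have node_zero : (∏ l ∈ Icc 1 k, (-2 * ((0 : ℕ) : ℝ) - (2 * l - d))) /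
      ∏ j ∈ (insert 0 (Icc 1 k)).erase 0, (-2 * ((0 : ℕ) : ℝ) - -2 * j) =
      ∏ l ∈ Icc 1 k, (d - 2 * l) / (2 * (l : ℝ)) := by
    rw [erase_insert (by simp), prod_div_distrib]
    congr 1 <;> refine prod_congr rfl fun l _ => by push_cast; ring
  have node_pos : ∀ j ∈ Icc 1 k, (∏ l ∈ Icc 1 k, (-2 * (j : ℝ) - (2 * l - d))) /
      ∏ i ∈ (insert 0 (Icc 1 k)).erase j, (-2 * (j : ℝ) - -2 * i) =
      -(((∏ l ∈ Icc 1 k, (d - 2 * j - 2 * l)) /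
        (∏ l ∈ (Icc 1 k).erase j, ((2 * l : ℝ) - 2 * j))) / (2 * (j : ℝ))) := by
    intro j hj
    have hj0 : (0 : ℕ) ≠ j := by grind
    have numerator : ∏ l ∈ Icc 1 k, (-2 * (j : ℝ) - (2 * l - d)) =
        ∏ l ∈ Icc 1 k, (d - 2 * j - 2 * l) := prod_congr rfl fun l _ => by ring
    have denominator : ∏ i ∈ (Icc 1 k).erase j, (-2 * (j : ℝ) - -2 * i) =
        ∏ l ∈ (Icc 1 k).erase j, ((2 * l : ℝ) - 2 * j) := prod_congr rfl fun l _ => by ring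
    rw [erase_insert_of_ne hj0, prod_insert (by simp), numerator, denominator]
    push_cast
    ring
  rw [node_zero, sum_congr rfl node_pos, sum_neg_distrib] at key
  linarith

/-- For k ≥ 1 and real d ∉ {2, 4, …, 4k}, with c_j = ∏_ℓ (d−2j−2ℓ) / ∏_{ℓ≠j} (2ℓ−2j),
one has ∑_{j=1}^k c_j/(2j) + 1 = ∏_{ℓ=1}^k (d−2ℓ)/(2ℓ). -/
theorem cauchy_coeff_sum_prod (k : ℕ) (hk : 1 ≤ k) (d : ℝ)
    (hd : ∀ l ∈ Finset.Icc 1 (2 * k), d ≠ 2 * (l : ℝ)) :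
    (∑ j ∈ Finset.Icc 1 k,
        ((∏ l ∈ Finset.Icc 1 k, (d - 2 * j - 2 * l)) /
            (∏ l ∈ (Finset.Icc 1 k).erase j, ((2 * l : ℝ) - 2 * j))) / (2 * (j : ℝ))) + 1
      = ∏ l ∈ Finset.Icc 1 k, (d - 2 * l) / (2 * (l : ℝ)) :=
  cauchy_coeff_sum_prod_general k d
end

section
/- Let A = [1/(x_i − y_j)] be an invertible k × k Cauchy matrix (x_i pairwise distinct, y_j pairwise distinct, x_i ≠ y_j for all i,j). Then the inverse B = A^{-1} has entries b_{ij} = (x_j − y_i) · A_j(y_i) · B_i(x_j), where A_j(x) = ∏_{ℓ≠j} (x − x_ℓ)/(x_j − x_ℓ) and B_i(y) = ∏_{ℓ≠i} (y − y_ℓ)/(y_i − y_ℓ) are the Lagrange basis polynomials. -/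
/-!
Write `A_m` and `B_j` for the Lagrange bases on the nodes `x` and `y`. In barycentric form
`A_m(t) = ω(t) w_m / (t - x_m)`, with `ω` the nodal polynomial and `w_m` the nodal weights, so
for `t` off the nodes `(x_m - t) A_m(t) / (x_i - t) = (w_m / w_i) A_i(t)`. Hence
`(A B)_{im} = (w_m / w_i) ∑_j A_i(y_j) B_j(x_m)`, and the sum is `A_i(x_m) = δ_{im}`, because
`A_i` has degree `< k` and therefore equals its Lagrange interpolant on the nodes `y`.
-/

open Finset Polynomial

namespace Lagrange

variable {F ι : Type*} [Field F] [DecidableEq ι] {s : Finset ι} {v : ι → F} {i m : ι}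

theorem eval_basis (t : F) :
    (Lagrange.basis s v i).eval t = ∏ l ∈ s.erase i, (t - v l) / (v i - v l) := by
  simp only [Lagrange.basis, basisDivisor, eval_prod, eval_mul, eval_C, eval_sub, eval_X,
    div_eq_inv_mul]

theorem degree_basis_lt (hvs : Set.InjOn v s) (hi : i ∈ s) :
    (Lagrange.basis s v i).degree < #s := by
  rw [degree_basis hvs hi]
  exact_mod_cast Nat.sub_lt (card_pos.mpr ⟨i, hi⟩) one_pos

theorem eval_eq_sum_eval_mul_eval_basis (hvs : Set.InjOn v s) {p : F[X]} (hp : p.degree < #s)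
    (t : F) : p.eval t = ∑ j ∈ s, p.eval (v j) * (Lagrange.basis s v j).eval t := by
  conv_lhs => rw [eq_interpolate hvs hp]
  simp only [interpolate_apply, eval_finsetSum, eval_mul, eval_C]

theorem inv_sub_mul_sub_mul_eval_basis (hvs : Set.InjOn v s) (hi : i ∈ s) (hm : m ∈ s)
    {t : F} (ht : ∀ l ∈ s, t ≠ v l) :
    (v i - t)⁻¹ * ((v m - t) * (Lagrange.basis s v m).eval t) =
      nodalWeight s v m / nodalWeight s v i * (Lagrange.basis s v i).eval t := by
  have hit : v i - t ≠ 0 := sub_ne_zero.mpr (ht i hi).symm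
  have hti : t - v i ≠ 0 := sub_ne_zero.mpr (ht i hi)
  have htm : t - v m ≠ 0 := sub_ne_zero.mpr (ht m hm)
  have hwi : nodalWeight s v i ≠ 0 := nodalWeight_ne_zero hvs hi
  rw [eval_basis_not_at_node hm (ht m hm), eval_basis_not_at_node hi (ht i hi)]
  field_simp
  ring

end Lagrange

open Lagrange

theorem cauchy_mul_lagrange_eq_one {F ι : Type*} [Field F] [Fintype ι] [DecidableEq ι]
    {x y : ι → F} (hx : Function.Injective x) (hy : Function.Injective y)
    (hxy : ∀ i j, x i ≠ y j) :
    (Matrix.of fun i j => (x i - y j)⁻¹) *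
        (Matrix.of fun i j => (x j - y i) * (Lagrange.basis univ x j).eval (y i) *
          (Lagrange.basis univ y i).eval (x j)) = 1 := by
  ext i m
  have hxs : Set.InjOn x (univ : Finset ι) := hx.injOn
  calc ∑ j, (x i - y j)⁻¹ * ((x m - y j) * (Lagrange.basis univ x m).eval (y j) *
          (Lagrange.basis univ y j).eval (x m))
      = nodalWeight univ x m / nodalWeight univ x i *
          ∑ j, (Lagrange.basis univ x i).eval (y j) * (Lagrange.basis univ y j).eval (x m) := by
        rw [mul_sum]
        refine sum_congr rfl fun j _ => ?_
        rw [← mul_assoc, inv_sub_mul_sub_mul_eval_basis hxs (mem_univ i) (mem_univ m)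
          fun l _ => (hxy l j).symm, mul_assoc]
    _ = nodalWeight univ x m / nodalWeight univ x i * (Lagrange.basis univ x i).eval (x m) := by
        rw [← eval_eq_sum_eval_mul_eval_basis hy.injOn (degree_basis_lt hxs (mem_univ i))]
    _ = (1 : Matrix ι ι F) i m := by
        rcases eq_or_ne i m with rfl | him
        · rw [eval_basis_self hxs (mem_univ i), div_self (nodalWeight_ne_zero hxs (mem_univ i)),
            mul_one, Matrix.one_apply_eq]
        · rw [eval_basis_of_ne him (mem_univ m), mul_zero, Matrix.one_apply_ne him]

/-- The inverse of the Cauchy matrix A = [1/(x_i − y_j)] is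
B = [(x_j − y_i) A_j(y_i) B_i(x_j)] built from Lagrange basis polynomials. -/
theorem cauchy_matrix_inverse {k : ℕ} (x y : Fin k → ℝ)
    (hx : Function.Injective x) (hy : Function.Injective y)
    (hxy : ∀ i j, x i ≠ y j) :
    (Matrix.of fun i j => (x i - y j)⁻¹) *
        (Matrix.of fun i j : Fin k => (x j - y i) *
          (∏ l ∈ Finset.univ.erase j, (y i - x l) / (x j - x l)) *
          (∏ l ∈ Finset.univ.erase i, (x j - y l) / (y i - y l))) = 1 ∧
      (Matrix.of fun i j : Fin k => (x j - y i) *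
          (∏ l ∈ Finset.univ.erase j, (y i - x l) / (x j - x l)) *
          (∏ l ∈ Finset.univ.erase i, (x j - y l) / (y i - y l))) *
        (Matrix.of fun i j => (x i - y j)⁻¹) = 1 := by
  have h := cauchy_mul_lagrange_eq_one hx hy hxy
  simp only [eval_basis] at h
  exact ⟨h, mul_eq_one_comm.mp h⟩
end

section
/- Let d ≥ 3, k = [d/4], R > 0, and suppose d is odd. The functions r^{2i−d}, 1 ≤ i ≤ k, are linearly independent in L²(r ≥ R, r^{d−1} dr), and for any g ∈ L²(r ≥ R, r^{d−1} dr) the squared norm of the orthogonal projection of g onto the orthogonal complement of W = span{r^{2i−d} : 1 ≤ i ≤ k} equals ∫_R^∞ |g(r)|² r^{d−1} dr − ∑_{i,j=1}^k (R^{d−2i−2j}/(d−2i−2j)) c_i c_j (∫_R^∞ g(r) r^{2i−1} dr)(∫_R^∞ \overline{g(r)} r^{2j−1} dr), where c_j = ∏_{ℓ=1}^k (d − 2j − 2ℓ) / ∏_{1≤ℓ≤k, ℓ≠j} (2ℓ − 2j). -/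
/-!
The Gram matrix of the functions `r ^ (2 i - d)` in `L²((R, ∞), r ^ (d - 1) dr)` is
`G i j = R ^ (2 i + 2 j - d) / (d - 2 i - 2 j)`: up to the diagonal scalings `R ^ (2 i)` and
`R ^ (2 j - d)` it is the Cauchy matrix `1 / (y j - x i)` with nodes `x i = 2 i`, `y j = d - 2 j`.
A Cauchy matrix is inverted in closed form by Lagrange interpolation: interpolating
`∏_{m ≠ i} (X - x m)` at the nodes `y` and evaluating at `x l` produces the inverse, whose entries
are built from the weights `c_j`. The squared distance from `g` to `∑ λ i r ^ (2 i - d)` is the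
quadratic `‖g‖² - 2 λ ⬝ b + λ ⬝ G λ` in the coefficients, minimized at `λ = G⁻¹ b` with value
`‖g‖² - b ⬝ G⁻¹ b`. Linear independence holds because `r ^ d ∑ λ i r ^ (2 i - d)` is a polynomial
in `r`, which cannot vanish almost everywhere on a half-line unless it is zero. For odd `d` we have
`4 ⌊d / 4⌋ < d`, which makes all the integrals converge.
-/

open MeasureTheory Set Finset Polynomial Lagrange

section CauchyMatrix

variable {F ι : Type*} [Field F] [DecidableEq ι] {s : Finset ι} {x y : ι → F}

noncomputable def cauchyWeight (s : Finset ι) (x y : ι → F) (j : ι) : F :=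
  (nodal s x).eval (y j) * nodalWeight s y j

theorem cauchyWeight_ne_zero (hy : Set.InjOn y s) (hxy : ∀ a ∈ s, ∀ b ∈ s, x a ≠ y b)
    {j : ι} (hj : j ∈ s) : cauchyWeight s x y j ≠ 0 :=
  mul_ne_zero (eval_nodal_not_at_node fun m hm => (hxy m hm j hj).symm)
    (nodalWeight_ne_zero hy hj)

theorem cauchyWeight_swap_of_add_eq {c : F} (hc : ∀ m, x m + y m = c) {l : ι} (hl : l ∈ s) :
    cauchyWeight s y x l = -cauchyWeight s x y l := by
  have hnodal : (nodal s y).eval (x l) = (-1) ^ #s * (nodal s x).eval (y l) := by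
    rw [eval_nodal, eval_nodal, ← prod_neg]
    exact prod_congr rfl fun m _ => by linear_combination hc l - hc m
  have hweight : nodalWeight s x l = (-1) ^ #(s.erase l) * nodalWeight s y l := by
    rw [nodalWeight, nodalWeight, ← prod_neg]
    refine prod_congr rfl fun m _ => ?_
    rw [← inv_neg, neg_sub]
    congr 1
    linear_combination hc l - hc m
  rw [cauchyWeight, cauchyWeight, hnodal, hweight, ← card_erase_add_one hl]
  ring_nf
  rw [pow_mul', neg_one_sq, one_pow, mul_one]

theorem sum_cauchyWeight_div (hy : Set.InjOn y s) (hxy : ∀ a ∈ s, ∀ b ∈ s, x a ≠ y b)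
    {i l : ι} (hi : i ∈ s) (hl : l ∈ s) :
    ∑ j ∈ s, cauchyWeight s x y j / ((y j - x i) * (y j - x l)) =
      -(nodal (s.erase i) x).eval (x l) / (nodal s y).eval (x l) := by
  -- Interpolate `nodal (s.erase i) x`, of degree `< #s`, at the nodes `y`, evaluate at `x l`.
  have hdeg : (nodal (s.erase i) x).degree < #s := by
    rw [degree_nodal]
    exact_mod_cast card_erase_lt_of_mem hi
  have hinterp := congrArg (eval (x l)) (eq_interpolate hy hdeg)
  rw [eval_interpolate_not_at_node _ fun j hj => hxy l hl j hj] at hinterp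
  have hN : (nodal s y).eval (x l) ≠ 0 := eval_nodal_not_at_node fun j hj => hxy l hl j hj
  rw [hinterp, eq_div_iff hN, ← mul_neg, ← sum_neg_distrib, mul_comm]
  congr 1
  refine sum_congr rfl fun j hj => ?_
  have hyx : ∀ a ∈ s, y j - x a ≠ 0 := fun a ha => sub_ne_zero.mpr (hxy a ha j hj).symm
  have hnode : (nodal s x).eval (y j) = (y j - x i) * (nodal (s.erase i) x).eval (y j) := by
    rw [eval_nodal, eval_nodal, mul_prod_erase s (fun m => y j - x m) hi]
  have hji := hyx i hi
  have hjl := hyx l hl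
  have hlj : x l - y j ≠ 0 := sub_ne_zero.mpr (hxy l hl j hj)
  rw [cauchyWeight, hnode]
  field_simp
  ring

theorem sum_cauchyWeight_div_eq_ite (hy : Set.InjOn y s)
    (hxy : ∀ a ∈ s, ∀ b ∈ s, x a ≠ y b)
    {i l : ι} (hi : i ∈ s) (hl : l ∈ s) :
    ∑ j ∈ s, cauchyWeight s x y j / ((y j - x i) * (y j - x l)) =
      if i = l then -(cauchyWeight s y x l)⁻¹ else 0 := by
  rw [sum_cauchyWeight_div hy hxy hi hl]
  split_ifs with hil
  · rw [hil, cauchyWeight, nodalWeight_eq_eval_nodal_erase_inv, mul_inv, inv_inv, neg_div,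
      div_eq_mul_inv, mul_comm]
  · rw [eval_nodal_at_node (mem_erase.mpr ⟨Ne.symm hil, hl⟩), neg_zero, zero_div]

end CauchyMatrix

section QuadraticMinimization

variable {ι : Type*} (s : Finset ι) (G : ι → ι → ℝ)

theorem sum_sum_sub_mul_sub_mul (hG : ∀ i j, G i j = G j i) (u v : ι → ℝ) :
    ∑ i ∈ s, ∑ j ∈ s, (u i - v i) * (u j - v j) * G i j =
      ∑ i ∈ s, ∑ j ∈ s, u i * u j * G i j - 2 * ∑ i ∈ s, u i * ∑ j ∈ s, G i j * v j
        + ∑ i ∈ s, v i * ∑ j ∈ s, G i j * v j := by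
  have hbilin : ∀ w z : ι → ℝ, ∑ i ∈ s, ∑ j ∈ s, w i * z j * G i j =
      ∑ i ∈ s, w i * ∑ j ∈ s, G i j * z j := fun w z => by
    simp only [mul_sum]
    exact sum_congr rfl fun i _ => sum_congr rfl fun j _ => by ring
  have hswap :
      ∑ i ∈ s, v i * ∑ j ∈ s, G i j * u j = ∑ i ∈ s, u i * ∑ j ∈ s, G i j * v j := by
    rw [← hbilin, ← hbilin, sum_comm]
    exact sum_congr rfl fun i _ => sum_congr rfl fun j _ => by rw [hG]; ring
  simp only [sub_mul, mul_sub, sum_sub_distrib, hbilin, hswap]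
  ring

theorem iInf_quadratic_eq [DecidableEq ι] (B : ℝ) (b : ι → ℝ) (A : ι → ι → ℝ)
    (hG : ∀ i j, G i j = G j i)
    (hGA : ∀ i ∈ s, ∀ l ∈ s, ∑ j ∈ s, G i j * A j l = if i = l then 1 else 0)
    (hG_nonneg : ∀ μ : ι → ℝ, 0 ≤ ∑ i ∈ s, ∑ j ∈ s, μ i * μ j * G i j) :
    ⨅ lam : ι → ℝ,
        (B - 2 * ∑ i ∈ s, lam i * b i + ∑ i ∈ s, ∑ j ∈ s, lam i * lam j * G i j) =
      B - ∑ i ∈ s, ∑ j ∈ s, A i j * b i * b j := by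
  set Q : (ι → ℝ) → ℝ := fun lam =>
    B - 2 * ∑ i ∈ s, lam i * b i + ∑ i ∈ s, ∑ j ∈ s, lam i * lam j * G i j
  set lam₀ : ι → ℝ := fun j => ∑ l ∈ s, A j l * b l
  have hGlam₀ :
      ∀ u : ι → ℝ, ∑ i ∈ s, u i * ∑ j ∈ s, G i j * lam₀ j = ∑ i ∈ s, u i * b i := by
    refine fun u => sum_congr rfl fun i hi => congrArg (u i * ·) ?_
    calc ∑ j ∈ s, G i j * lam₀ j = ∑ l ∈ s, (∑ j ∈ s, G i j * A j l) * b l := by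
          simp only [lam₀, mul_sum, sum_mul, mul_assoc]
          exact sum_comm
      _ = ∑ l ∈ s, (if i = l then 1 else 0) * b l :=
          sum_congr rfl fun l hl => by rw [hGA i hi l hl]
      _ = b i := by simp [hi]
  have hQlam₀ : Q lam₀ = B - ∑ i ∈ s, lam₀ i * b i := by
    have hquad : ∑ i ∈ s, ∑ j ∈ s, lam₀ i * lam₀ j * G i j =
        ∑ i ∈ s, lam₀ i * ∑ j ∈ s, G i j * lam₀ j := by
      simp only [mul_sum]
      exact sum_congr rfl fun i _ => sum_congr rfl fun j _ => by ring
    simp only [Q, hquad, hGlam₀]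
    ring
  have hQ : ∀ lam,
      Q lam = Q lam₀ + ∑ i ∈ s, ∑ j ∈ s, (lam i - lam₀ i) * (lam j - lam₀ j) * G i j := by
    intro lam
    rw [hQlam₀, sum_sum_sub_mul_sub_mul s G hG, hGlam₀, hGlam₀]
    ring
  have hleast : IsLeast (range Q) (Q lam₀) := by
    refine ⟨mem_range_self lam₀, forall_mem_range.mpr fun lam => ?_⟩
    rw [hQ lam]
    linarith [hG_nonneg fun i => lam i - lam₀ i]
  rw [hleast.isGLB.ciInf_eq, hQlam₀]
  congr 1
  simp only [lam₀, sum_mul]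
  exact sum_congr rfl fun i _ => sum_congr rfl fun j _ => by ring

end QuadraticMinimization

section WeightedL2

variable {α ι : Type*} [MeasurableSpace α] {μ : Measure α}

theorem integrable_mul_mul_of_integrable_sq_mul {f g w : α → ℝ}
    (hf : Integrable (fun x => f x ^ 2 * w x) μ) (hg : Integrable (fun x => g x ^ 2 * w x) μ)
    (hw : ∀ᵐ x ∂μ, 0 ≤ w x) (hfgw : AEStronglyMeasurable (fun x => f x * g x * w x) μ) :
    Integrable (fun x => f x * g x * w x) μ := by
  refine ((hf.add hg).div_const 2).mono' hfgw ?_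
  filter_upwards [hw] with x hx
  have hamgm := mul_le_mul_of_nonneg_right (two_mul_le_add_sq |f x| |g x|) hx
  rw [sq_abs, sq_abs] at hamgm
  rw [Real.norm_eq_abs, abs_mul, abs_mul, abs_of_nonneg hx, Pi.add_apply]
  linarith

theorem integral_sub_sum_sq_mul (s : Finset ι) (g w : α → ℝ) (φ : ι → α → ℝ)
    (c : ι → ℝ)
    (hg : Integrable (fun x => g x ^ 2 * w x) μ)
    (hgφ : ∀ i ∈ s, Integrable (fun x => g x * φ i x * w x) μ)
    (hφφ : ∀ i ∈ s, ∀ j ∈ s, Integrable (fun x => φ i x * φ j x * w x) μ) :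
    ∫ x, (g x - ∑ i ∈ s, c i * φ i x) ^ 2 * w x ∂μ =
      ∫ x, g x ^ 2 * w x ∂μ - 2 * ∑ i ∈ s, c i * ∫ x, g x * φ i x * w x ∂μ +
        ∑ i ∈ s, ∑ j ∈ s, c i * c j * ∫ x, φ i x * φ j x * w x ∂μ := by
  have hcross : Integrable (fun x => 2 * ∑ i ∈ s, c i * (g x * φ i x * w x)) μ :=
    (integrable_finsetSum _ fun i hi => (hgφ i hi).const_mul _).const_mul 2
  have hquad :
      ∀ i ∈ s, Integrable (fun x => ∑ j ∈ s, c i * c j * (φ i x * φ j x * w x)) μ :=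
    fun i hi => integrable_finsetSum _ fun j hj => (hφφ i hi j hj).const_mul _
  have hdiff :
      Integrable (fun x => g x ^ 2 * w x - 2 * ∑ i ∈ s, c i * (g x * φ i x * w x)) μ :=
    hg.sub hcross
  have hpoint : ∀ x, (g x - ∑ i ∈ s, c i * φ i x) ^ 2 * w x =
      g x ^ 2 * w x - 2 * ∑ i ∈ s, c i * (g x * φ i x * w x) +
        ∑ i ∈ s, ∑ j ∈ s, c i * c j * (φ i x * φ j x * w x) := by
    intro x
    have hlin :
        g x * (∑ i ∈ s, c i * φ i x) * w x = ∑ i ∈ s, c i * (g x * φ i x * w x) := by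
      rw [mul_sum, sum_mul]
      exact sum_congr rfl fun i _ => by ring
    have hsq : (∑ i ∈ s, c i * φ i x) ^ 2 * w x =
        ∑ i ∈ s, ∑ j ∈ s, c i * c j * (φ i x * φ j x * w x) := by
      rw [sq, sum_mul_sum, sum_mul]
      refine sum_congr rfl fun i _ => ?_
      rw [sum_mul]
      exact sum_congr rfl fun j _ => by ring
    rw [← hlin, ← hsq]
    ring
  simp_rw [hpoint]
  rw [integral_add hdiff (integrable_finsetSum _ hquad), integral_sub hg hcross,
    integral_const_mul, integral_finsetSum _ hquad,
    integral_finsetSum _ fun i hi => (hgφ i hi).const_mul _]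
  simp only [integral_const_mul]
  refine congrArg _ (sum_congr rfl fun i hi => ?_)
  rw [integral_finsetSum _ fun j hj => (hφφ i hi j hj).const_mul _]
  simp only [integral_const_mul]

end WeightedL2

theorem integrableOn_Ioi_zpow_of_lt {n : ℤ} (hn : n < -1) {c : ℝ} (hc : 0 < c) :
    IntegrableOn (fun t : ℝ => t ^ n) (Ioi c) :=
  (integrableOn_Ioi_rpow_of_lt (by exact_mod_cast hn) hc).congr_fun
    (fun t _ => Real.rpow_intCast t n) measurableSet_Ioi

theorem integral_Ioi_zpow_of_lt {n : ℤ} (hn : n < -1) {c : ℝ} (hc : 0 < c) :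
    ∫ t in Ioi c, t ^ n = -c ^ (n + 1) / ((n : ℝ) + 1) := by
  have h := integral_Ioi_rpow_of_lt (a := (n : ℝ)) (by exact_mod_cast hn) hc
  rw [← Int.cast_one, ← Int.cast_add, Real.rpow_intCast] at h
  simpa [Real.rpow_intCast] using h

theorem infinite_setOf_of_ae_restrict_Ioi {R : ℝ} {P : ℝ → Prop}
    (h : ∀ᵐ r ∂volume.restrict (Ioi R), P r) : {r | P r}.Infinite := by
  intro hfin
  have hnull : volume.restrict (Ioi R) ({r | P r} ∪ {r | P r}ᶜ) = 0 :=
    measure_union_null (hfin.measure_zero _) (ae_iff.mp h)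
  rw [union_compl_self, Measure.restrict_apply_univ, Real.volume_Ioi] at hnull
  exact ENNReal.top_ne_zero hnull

theorem eq_zero_of_ae_sum_mul_zpow_eq_zero {s : Finset ℕ} {d : ℤ} {R : ℝ} {lam : ℕ → ℝ}
    (h : ∀ᵐ r ∂volume.restrict (Ioi R), ∑ i ∈ s, lam i * r ^ ((2 * i : ℤ) - d) = 0) :
    ∀ i ∈ s, lam i = 0 := by
  set p : ℝ[X] := ∑ i ∈ s, C (lam i) * X ^ (2 * i)
  have hroot : ∀ᵐ r ∂volume.restrict (Ioi R), p.IsRoot r := by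
    filter_upwards [h, ae_restrict_of_ae (Measure.ae_ne volume 0)] with r hr hr0
    have heval : p.eval r = (∑ i ∈ s, lam i * r ^ ((2 * i : ℤ) - d)) * r ^ d := by
      simp only [p, eval_finsetSum, eval_mul, eval_C, eval_pow, eval_X, sum_mul, mul_assoc,
        ← zpow_add₀ hr0, sub_add_cancel]
      norm_cast
    rw [IsRoot, heval, hr, zero_mul]
  have hp : p = 0 := eq_zero_of_infinite_isRoot p (infinite_setOf_of_ae_restrict_Ioi hroot)
  intro i hi
  have hcoeff := congrArg (coeff · (2 * i)) hp
  simpa [p, finsetSum_coeff, coeff_C_mul_X_pow, hi] using hcoeff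

/-- `∫ r in Ioi R, r ^ (2 i - d) * r ^ (2 j - d) * r ^ (d - 1)`, when `2 i + 2 j < d`. -/
noncomputable def powGram (d : ℕ) (R : ℝ) (i j : ℕ) : ℝ :=
  R ^ ((2 * i + 2 * j : ℤ) - d) / ((d : ℝ) - 2 * i - 2 * j)

theorem powGram_comm (d : ℕ) (R : ℝ) (i j : ℕ) : powGram d R i j = powGram d R j i := by
  rw [powGram, powGram, add_comm (2 * (i : ℤ)), sub_right_comm (d : ℝ)]

theorem zpow_two_mul_sub_mul_zpow_sub_one {r : ℝ} (hr : r ≠ 0) {i : ℕ} (hi : 1 ≤ i)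
    (d : ℤ) :
    r ^ ((2 * i : ℤ) - d) * r ^ (d - 1) = r ^ (2 * i - 1) := by
  rw [← zpow_add₀ hr, ← zpow_natCast]
  congr 1
  omega

theorem setIntegral_Ioi_sub_sum_sq {d k : ℕ} (hk : 4 * k < d) {R : ℝ} (hR : 0 < R)
    {g : ℝ → ℝ} (hmeas : Measurable g)
    (hg : IntegrableOn (fun r => g r ^ 2 * r ^ ((d : ℤ) - 1)) (Ioi R)) (lam : ℕ → ℝ) :
    ∫ r in Ioi R,
        (g r - ∑ i ∈ Finset.Icc 1 k, lam i * r ^ ((2 * i : ℤ) - d)) ^ 2 * r ^ ((d : ℤ) - 1) =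
      (∫ r in Ioi R, g r ^ 2 * r ^ ((d : ℤ) - 1)) -
        2 * ∑ i ∈ Finset.Icc 1 k, lam i * (∫ r in Ioi R, g r * r ^ (2 * i - 1)) +
        ∑ i ∈ Finset.Icc 1 k, ∑ j ∈ Finset.Icc 1 k, lam i * lam j * powGram d R i j := by
  have hexp :
      ∀ i ∈ Finset.Icc 1 k, ∀ j ∈ Finset.Icc 1 k, (2 * i + 2 * j : ℤ) - d - 1 < -1 := by
    intro i hi j hj
    simp only [Finset.mem_Icc] at hi hj
    omega
  have hpair : ∀ i ∈ Finset.Icc 1 k, ∀ j ∈ Finset.Icc 1 k, EqOn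
      (fun r : ℝ => r ^ ((2 * i : ℤ) - d) * r ^ ((2 * j : ℤ) - d) * r ^ ((d : ℤ) - 1))
      (fun r => r ^ ((2 * i + 2 * j : ℤ) - d - 1)) (Ioi R) := fun i _ j _ r hr => by
    simp only [← zpow_add₀ (hR.trans hr).ne']
    ring_nf
  have hφφ : ∀ i ∈ Finset.Icc 1 k, ∀ j ∈ Finset.Icc 1 k, IntegrableOn
      (fun r : ℝ => r ^ ((2 * i : ℤ) - d) * r ^ ((2 * j : ℤ) - d) * r ^ ((d : ℤ) - 1))
      (Ioi R) := fun i hi j hj =>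
    (integrableOn_Ioi_zpow_of_lt (hexp i hi j hj) hR).congr_fun (hpair i hi j hj).symm
      measurableSet_Ioi
  have hgφ : ∀ i ∈ Finset.Icc 1 k, IntegrableOn
      (fun r : ℝ => g r * r ^ ((2 * i : ℤ) - d) * r ^ ((d : ℤ) - 1)) (Ioi R) := fun i hi =>
    integrable_mul_mul_of_integrable_sq_mul hg
      (by simpa only [sq] using hφφ i hi i hi :
        IntegrableOn (fun r : ℝ => (r ^ ((2 * i : ℤ) - d)) ^ 2 * r ^ ((d : ℤ) - 1))
          (Ioi R) volume)
      ((ae_restrict_iff' measurableSet_Ioi).mpr (ae_of_all _ fun r hr =>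
        zpow_nonneg (hR.trans hr).le _))
      (by fun_prop)
  refine (integral_sub_sum_sq_mul (μ := volume.restrict (Ioi R)) (Finset.Icc 1 k) g
    (fun r => r ^ ((d : ℤ) - 1)) (fun i r => r ^ ((2 * i : ℤ) - d)) lam hg hgφ hφφ).trans ?_
  congr 1
  · refine congrArg _ (congrArg _ (sum_congr rfl fun i hi => congrArg _ ?_))
    refine setIntegral_congr_fun measurableSet_Ioi fun r hr => ?_
    rw [mul_assoc,
      zpow_two_mul_sub_mul_zpow_sub_one (hR.trans hr).ne' (Finset.mem_Icc.mp hi).1]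
  · refine sum_congr rfl fun i hi => sum_congr rfl fun j hj => congrArg _ ?_
    rw [setIntegral_congr_fun measurableSet_Ioi (hpair i hi j hj),
      integral_Ioi_zpow_of_lt (hexp i hi j hj) hR, sub_add_cancel, powGram, neg_div, ← div_neg]
    push_cast
    ring_nf

theorem sum_sum_mul_powGram_nonneg {d k : ℕ} (hk : 4 * k < d) {R : ℝ} (hR : 0 < R)
    (μ : ℕ → ℝ) :
    0 ≤ ∑ i ∈ Finset.Icc 1 k, ∑ j ∈ Finset.Icc 1 k, μ i * μ j * powGram d R i j := by
  have h := setIntegral_Ioi_sub_sum_sq hk hR (g := 0) measurable_const (by simp) μ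
  simp only [Pi.zero_apply, zero_sub, neg_sq, ne_eq, OfNat.ofNat_ne_zero, not_false_eq_true,
    zero_pow, zero_mul, integral_zero, mul_zero, sum_const_zero, sub_zero, zero_add] at h
  rw [← h]
  exact setIntegral_nonneg measurableSet_Ioi fun r hr =>
    mul_nonneg (sq_nonneg _) (zpow_nonneg (hR.trans hr).le _)

theorem prod_div_prod_eq_cauchyWeight (d : ℕ) (s : Finset ℕ) (j : ℕ) :
    (∏ l ∈ s, ((d : ℝ) - 2 * j - 2 * l)) / (∏ l ∈ s.erase j, ((2 * l : ℝ) - 2 * j)) =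
      cauchyWeight s (fun m : ℕ => 2 * (m : ℝ)) (fun m : ℕ => (d : ℝ) - 2 * m) j := by
  rw [cauchyWeight, eval_nodal, nodalWeight, prod_inv_distrib, div_eq_mul_inv]
  congr 2
  exact prod_congr rfl fun m _ => by ring

theorem sum_powGram_mul_eq_ite {d k : ℕ} (hk : 4 * k < d) {R : ℝ} (hR : 0 < R) {i l : ℕ}
    (hi : i ∈ Finset.Icc 1 k) (hl : l ∈ Finset.Icc 1 k) :
    ∑ j ∈ Finset.Icc 1 k, powGram d R i j *
      (R ^ ((d : ℤ) - 2 * j - 2 * l) / ((d : ℝ) - 2 * j - 2 * l) *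
        cauchyWeight (Finset.Icc 1 k) (fun m : ℕ => 2 * (m : ℝ)) (fun m : ℕ => d - 2 * m) j *
        cauchyWeight (Finset.Icc 1 k) (fun m : ℕ => 2 * (m : ℝ)) (fun m : ℕ => d - 2 * m) l) =
      if i = l then 1 else 0 := by
  set s := Finset.Icc 1 k
  set x : ℕ → ℝ := fun m => 2 * m
  set y : ℕ → ℝ := fun m => d - 2 * m
  set w := cauchyWeight s x y
  have hxy : ∀ a ∈ s, ∀ b ∈ s, x a ≠ y b := by
    intro a ha b hb h
    simp only [s, Finset.mem_Icc] at ha hb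
    have hsum : (2 * a + 2 * b : ℝ) = d := by linarith
    norm_cast at hsum
    omega
  have hy : InjOn y s := fun a _ b _ h => by simpa [y] using h
  have hterm : ∀ j ∈ s, powGram d R i j *
      (R ^ ((d : ℤ) - 2 * j - 2 * l) / ((d : ℝ) - 2 * j - 2 * l) * w j * w l) =
      R ^ (2 * (i : ℤ) - 2 * l) * w l * (w j / ((y j - x i) * (y j - x l))) := by
    intro j hj
    have hji : y j - x i ≠ 0 := sub_ne_zero.mpr (hxy i hi j hj).symm
    have hjl : y j - x l ≠ 0 := sub_ne_zero.mpr (hxy l hl j hj).symm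
    have hRpow : R ^ ((2 * i + 2 * j : ℤ) - d) * R ^ ((d : ℤ) - 2 * j - 2 * l) =
        R ^ (2 * (i : ℤ) - 2 * l) := by
      rw [← zpow_add₀ hR.ne']
      ring_nf
    simp only [x, y] at hji hjl ⊢
    have hij : (d : ℝ) - 2 * i - 2 * j ≠ 0 := by rwa [sub_right_comm]
    rw [powGram, ← hRpow]
    field_simp
    ring
  rw [sum_congr rfl hterm, ← mul_sum, sum_cauchyWeight_div_eq_ite hy hxy hi hl]
  split_ifs with hil
  · subst hil
    rw [cauchyWeight_swap_of_add_eq (c := (d : ℝ)) (fun m => by ring) hi, sub_self, zpow_zero,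
      inv_neg, neg_neg, one_mul, mul_inv_cancel₀ (cauchyWeight_ne_zero hy hxy hi)]
  · rw [mul_zero]

theorem projection_formula_g_general (d : ℕ) (hodd : Odd d) (R : ℝ) (hR : 0 < R)
    (g : ℝ → ℝ) (hmeas : Measurable g)
    (hg : IntegrableOn (fun r => g r ^ 2 * r ^ ((d : ℤ) - 1)) (Set.Ioi R)) :
    (∀ lam : ℕ → ℝ,
        (∀ᵐ r ∂(volume.restrict (Set.Ioi R)),
          ∑ i ∈ Finset.Icc 1 (d / 4), lam i * r ^ ((2 * i : ℤ) - d) = 0) →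
        ∀ i ∈ Finset.Icc 1 (d / 4), lam i = 0) ∧
    (⨅ lam : ℕ → ℝ,
        ∫ r in Set.Ioi R,
          (g r - ∑ i ∈ Finset.Icc 1 (d / 4), lam i * r ^ ((2 * i : ℤ) - d)) ^ 2 *
            r ^ ((d : ℤ) - 1))
      = (∫ r in Set.Ioi R, g r ^ 2 * r ^ ((d : ℤ) - 1))
        - ∑ i ∈ Finset.Icc 1 (d / 4), ∑ j ∈ Finset.Icc 1 (d / 4),
            R ^ ((d : ℤ) - 2 * i - 2 * j) / ((d : ℝ) - 2 * i - 2 * j) *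
              ((∏ l ∈ Finset.Icc 1 (d / 4), ((d : ℝ) - 2 * i - 2 * l)) /
                (∏ l ∈ (Finset.Icc 1 (d / 4)).erase i, ((2 * l : ℝ) - 2 * i))) *
              ((∏ l ∈ Finset.Icc 1 (d / 4), ((d : ℝ) - 2 * j - 2 * l)) /
                (∏ l ∈ (Finset.Icc 1 (d / 4)).erase j, ((2 * l : ℝ) - 2 * j))) *
              (∫ r in Set.Ioi R, g r * r ^ (2 * i - 1)) *
              (∫ r in Set.Ioi R, g r * r ^ (2 * j - 1)) := by
  have hk : 4 * (d / 4) < d := by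
    obtain ⟨t, rfl⟩ := hodd
    omega
  refine ⟨fun lam hlam => eq_zero_of_ae_sum_mul_zpow_eq_zero hlam, ?_⟩
  simp_rw [setIntegral_Ioi_sub_sum_sq hk hR hmeas hg, prod_div_prod_eq_cauchyWeight]
  exact iInf_quadratic_eq _ _ _ _ _ (powGram_comm d R)
    (fun i hi l hl => sum_powGram_mul_eq_ite hk hR hi hl) (sum_sum_mul_powGram_nonneg hk hR)

/-- For odd d ≥ 3, k = ⌊d/4⌋, R > 0: the functions r^{2i−d}, 1 ≤ i ≤ k, are linearly
independent in L²(r ≥ R, r^{d−1}dr), and for g in this space the squared norm of the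
projection onto the orthogonal complement of their span (realized as the infimum of
squared distances to the span) equals
∫ g² r^{d−1} − ∑_{i,j} (R^{d−2i−2j}/(d−2i−2j)) c_i c_j (∫ g r^{2i−1})(∫ g r^{2j−1}). -/
theorem projection_formula_g (d : ℕ) (hd : 3 ≤ d) (hodd : Odd d) (R : ℝ) (hR : 0 < R)
    (g : ℝ → ℝ) (hmeas : Measurable g)
    (hg : IntegrableOn (fun r => g r ^ 2 * r ^ ((d : ℤ) - 1)) (Set.Ioi R)) :
    (∀ lam : ℕ → ℝ,
        (∀ᵐ r ∂(volume.restrict (Set.Ioi R)),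
          ∑ i ∈ Finset.Icc 1 (d / 4), lam i * r ^ ((2 * i : ℤ) - d) = 0) →
        ∀ i ∈ Finset.Icc 1 (d / 4), lam i = 0) ∧
    (⨅ lam : ℕ → ℝ,
        ∫ r in Set.Ioi R,
          (g r - ∑ i ∈ Finset.Icc 1 (d / 4), lam i * r ^ ((2 * i : ℤ) - d)) ^ 2 *
            r ^ ((d : ℤ) - 1))
      = (∫ r in Set.Ioi R, g r ^ 2 * r ^ ((d : ℤ) - 1))
        - ∑ i ∈ Finset.Icc 1 (d / 4), ∑ j ∈ Finset.Icc 1 (d / 4),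
            R ^ ((d : ℤ) - 2 * i - 2 * j) / ((d : ℝ) - 2 * i - 2 * j) *
              ((∏ l ∈ Finset.Icc 1 (d / 4), ((d : ℝ) - 2 * i - 2 * l)) /
                (∏ l ∈ (Finset.Icc 1 (d / 4)).erase i, ((2 * l : ℝ) - 2 * i))) *
              ((∏ l ∈ Finset.Icc 1 (d / 4), ((d : ℝ) - 2 * j - 2 * l)) /
                (∏ l ∈ (Finset.Icc 1 (d / 4)).erase j, ((2 * l : ℝ) - 2 * j))) *
              (∫ r in Set.Ioi R, g r * r ^ (2 * i - 1)) *
              (∫ r in Set.Ioi R, g r * r ^ (2 * j - 1)) :=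
  projection_formula_g_general d hodd R hR g hmeas hg
end

section
/- For odd d and 1 ≤ i ≤ [d/4], there exist real coefficients a₁, …, a_i with a_i = 1 such that u(t,r) = ∑_{m=1}^i a_m t^{2i−2m+1} r^{2m−d} satisfies u_{tt} = u_{rr} + ((d−1)/r) u_r for all t ∈ ℝ, r > 0. -/
open Finset

noncomputable def coefAux (d i : ℕ) : ℕ → ℝ
  | 0 => 1
  | (k+1) => coefAux d i k * (((2*(i-k) : ℕ) : ℝ) - d) * (((2*(i-k) : ℕ) : ℝ) - 2)
      / (((2*k+3 : ℕ) : ℝ) * ((2*k+2 : ℕ) : ℝ))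

lemma coefAux_rec (d i m : ℕ) (hm : m < i) :
    coefAux d i (i - m) * ((2*i - 2*m + 1 : ℕ) : ℝ) * ((2*i - 2*m : ℕ) : ℝ)
      = coefAux d i (i - (m+1)) * (((2*m+2 : ℕ) : ℝ) - d) * ((2*m : ℕ) : ℝ) := by
  obtain ⟨j, rfl⟩ : ∃ j, i = m + j + 1 := ⟨i - m - 1, by omega⟩
  have e1 : m + j + 1 - m = j + 1 := by omega
  have e2 : m + j + 1 - (m+1) = j := by omega
  have e3 : 2*(m+j+1) - 2*m + 1 = 2*j+3 := by omega
  have e4 : 2*(m+j+1) - 2*m = 2*j+2 := by omega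
  rw [e1, e2, e3, e4]
  simp only [coefAux]
  rw [show m + j + 1 - j = m + 1 from by omega]
  have hd1 : ((2*j+3 : ℕ) : ℝ) ≠ 0 := by positivity
  have hd2 : ((2*j+2 : ℕ) : ℝ) ≠ 0 := by positivity
  push_cast
  push_cast at hd1 hd2
  field_simp
  ring

lemma key (d i : ℕ) (a : ℕ → ℝ) (hi1 : 1 ≤ i)
    (hrec : ∀ m, m < i →
      a m * ((2*i - 2*m + 1 : ℕ) : ℝ) * ((2*i - 2*m : ℕ) : ℝ)
        = a (m+1) * (((2*m+2 : ℕ) : ℝ) - d) * ((2*m : ℕ) : ℝ))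
    (t r : ℝ) (hr : 0 < r) :
    deriv (deriv (fun s : ℝ =>
        ∑ m ∈ Finset.Icc 1 i, a m * s ^ (2 * i - 2 * m + 1) * r ^ ((2 * m : ℤ) - d))) t
      = deriv (deriv (fun ρ : ℝ =>
          ∑ m ∈ Finset.Icc 1 i, a m * t ^ (2 * i - 2 * m + 1) * ρ ^ ((2 * m : ℤ) - d))) r
        + ((d : ℝ) - 1) / r *
          deriv (fun ρ : ℝ =>
            ∑ m ∈ Finset.Icc 1 i, a m * t ^ (2 * i - 2 * m + 1) * ρ ^ ((2 * m : ℤ) - d)) r := by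
  have hr' : r ≠ 0 := ne_of_gt hr
  have h1 : ∀ s : ℝ, HasDerivAt (fun s : ℝ =>
      ∑ m ∈ Finset.Icc 1 i, a m * s ^ (2 * i - 2 * m + 1) * r ^ ((2 * m : ℤ) - d))
      (∑ m ∈ Finset.Icc 1 i,
        a m * (((2 * i - 2 * m + 1 : ℕ) : ℝ) * s ^ (2 * i - 2 * m + 1 - 1)) * r ^ ((2 * m : ℤ) - d)) s :=
    fun s => HasDerivAt.fun_sum fun m _ =>
      ((hasDerivAt_pow (2 * i - 2 * m + 1) s).const_mul (a m)).mul_const _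
  have hderiv1 : deriv (fun s : ℝ =>
      ∑ m ∈ Finset.Icc 1 i, a m * s ^ (2 * i - 2 * m + 1) * r ^ ((2 * m : ℤ) - d))
      = fun s => ∑ m ∈ Finset.Icc 1 i,
        a m * (((2 * i - 2 * m + 1 : ℕ) : ℝ) * s ^ (2 * i - 2 * m + 1 - 1)) * r ^ ((2 * m : ℤ) - d) :=
    funext fun s => (h1 s).deriv
  have h2 : HasDerivAt (fun s : ℝ => ∑ m ∈ Finset.Icc 1 i,
      a m * (((2 * i - 2 * m + 1 : ℕ) : ℝ) * s ^ (2 * i - 2 * m + 1 - 1)) * r ^ ((2 * m : ℤ) - d))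
      (∑ m ∈ Finset.Icc 1 i,
        a m * (((2 * i - 2 * m + 1 : ℕ) : ℝ) * (((2 * i - 2 * m + 1 - 1 : ℕ) : ℝ)
          * t ^ (2 * i - 2 * m + 1 - 1 - 1))) * r ^ ((2 * m : ℤ) - d)) t :=
    HasDerivAt.fun_sum fun m _ =>
      (((hasDerivAt_pow (2 * i - 2 * m + 1 - 1) t).const_mul
        (((2 * i - 2 * m + 1 : ℕ) : ℝ))).const_mul (a m)).mul_const _
  have h3 : ∀ ρ : ℝ, ρ ≠ 0 → HasDerivAt (fun ρ : ℝ =>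
      ∑ m ∈ Finset.Icc 1 i, a m * t ^ (2 * i - 2 * m + 1) * ρ ^ ((2 * m : ℤ) - d))
      (∑ m ∈ Finset.Icc 1 i, a m * t ^ (2 * i - 2 * m + 1) *
        ((((2 * m : ℤ) - d : ℤ) : ℝ) * ρ ^ ((2 * m : ℤ) - d - 1))) ρ :=
    fun ρ hρ => HasDerivAt.fun_sum fun m _ =>
      (hasDerivAt_zpow ((2 * m : ℤ) - d) ρ (Or.inl hρ)).const_mul (a m * t ^ (2 * i - 2 * m + 1))
  have hderiv3 : deriv (fun ρ : ℝ =>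
      ∑ m ∈ Finset.Icc 1 i, a m * t ^ (2 * i - 2 * m + 1) * ρ ^ ((2 * m : ℤ) - d))
      =ᶠ[nhds r] fun ρ => ∑ m ∈ Finset.Icc 1 i, a m * t ^ (2 * i - 2 * m + 1) *
        ((((2 * m : ℤ) - d : ℤ) : ℝ) * ρ ^ ((2 * m : ℤ) - d - 1)) := by
    filter_upwards [eventually_ne_nhds hr'] with ρ hρ
    exact (h3 ρ hρ).deriv
  have h4 : HasDerivAt (fun ρ : ℝ => ∑ m ∈ Finset.Icc 1 i, a m * t ^ (2 * i - 2 * m + 1) *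
      ((((2 * m : ℤ) - d : ℤ) : ℝ) * ρ ^ ((2 * m : ℤ) - d - 1)))
      (∑ m ∈ Finset.Icc 1 i, a m * t ^ (2 * i - 2 * m + 1) *
        ((((2 * m : ℤ) - d : ℤ) : ℝ) * ((((2 * m : ℤ) - d - 1 : ℤ) : ℝ)
          * r ^ ((2 * m : ℤ) - d - 1 - 1)))) r :=
    HasDerivAt.fun_sum fun m _ =>
      ((hasDerivAt_zpow ((2 * m : ℤ) - d - 1) r (Or.inl hr')).const_mul
        ((((2 * m : ℤ) - d : ℤ) : ℝ))).const_mul (a m * t ^ (2 * i - 2 * m + 1))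
  rw [hderiv1, h2.deriv, hderiv3.deriv_eq, h4.deriv, (h3 r hr').deriv]
  rw [Finset.mul_sum, ← Finset.sum_add_distrib]
  have hcomb : ∀ m : ℕ,
      (a m * t ^ (2*i-2*m+1) * ((((2*m : ℤ) - d : ℤ) : ℝ) * ((((2*m : ℤ) - d - 1 : ℤ) : ℝ)
          * r ^ ((2*m : ℤ) - d - 1 - 1)))
        + ((d:ℝ) - 1) / r * (a m * t ^ (2*i-2*m+1) * ((((2*m : ℤ) - d : ℤ) : ℝ)
          * r ^ ((2*m : ℤ) - d - 1))))
      = a m * t ^ (2*i-2*m+1) * (((((2*m : ℤ) - d : ℤ) : ℝ)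
          * ((((2*m : ℤ) - d : ℤ) : ℝ) + d - 2)) * r ^ ((2*m : ℤ) - d - 1 - 1)) := by
    intro m
    have hz : r ^ ((2*m : ℤ) - d - 1) = r ^ ((2*m : ℤ) - d - 1 - 1) * r := by
      rw [← zpow_add_one₀ hr']
      congr 1
      ring
    rw [hz]
    push_cast
    field_simp
    ring
  rw [Finset.sum_congr rfl fun x _ => hcomb x]
  simp only [← Finset.Ico_add_one_right_eq_Icc]
  rw [Finset.sum_Ico_eq_sum_range]
  rw [Finset.sum_Ico_eq_sum_range]
  simp only [Nat.succ_sub_one, Nat.add_sub_cancel]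
  obtain ⟨j, rfl⟩ : ∃ j, i = j + 1 := ⟨i - 1, by omega⟩
  rw [Finset.sum_range_succ, Finset.sum_range_succ']
  have htop : a (1+j) * (((2*(j+1) - 2*(1+j) + 1 : ℕ) : ℝ) * (((2*(j+1) - 2*(1+j) : ℕ) : ℝ)
      * t ^ (2*(j+1) - 2*(1+j) - 1))) * r ^ (2*((1+j : ℕ) : ℤ) - d) = 0 := by
    rw [show 2*(j+1) - 2*(1+j) = 0 from by omega]
    norm_num
  have h0 : a (1+0) * t ^ (2*(j+1) - 2*(1+0) + 1) * ((((2*((1+0 : ℕ) : ℤ) - d : ℤ) : ℝ)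
      * ((((2*((1+0 : ℕ) : ℤ) - d : ℤ)) : ℝ) + d - 2)) * r ^ (2*((1+0 : ℕ) : ℤ) - d - 1 - 1)) = 0 := by
    have hz0 : (((2*((1+0 : ℕ) : ℤ) - d : ℤ)) : ℝ) + d - 2 = 0 := by push_cast; ring
    rw [hz0]
    ring
  rw [htop, h0, add_zero, add_zero]
  refine Finset.sum_congr rfl fun k hk => ?_
  have hkj : k < j := Finset.mem_range.mp hk
  rw [show 1+(k+1) = 1+k+1 from by omega]
  rw [show 2*(j+1) - 2*(1+k) - 1 = 2*(j+1) - 2*(1+k+1) + 1 from by omega]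
  rw [show (2*((1+k+1 : ℕ) : ℤ) - d - 1 - 1) = 2*((1+k : ℕ) : ℤ) - d from by push_cast; ring]
  have hrec' := hrec (1+k) (by omega)
  generalize t ^ (2*(j+1) - 2*(1+k+1) + 1) = X
  generalize r ^ (2*((1+k : ℕ) : ℤ) - (d : ℤ)) = Y
  push_cast at hrec' ⊢
  linear_combination (X * Y) * hrec'


/-- For odd d ≥ 3 and 1 ≤ i ≤ ⌊d/4⌋, there are coefficients a₁,…,a_i with a_i = 1 so that
u(t,r) = ∑_{m=1}^i a_m t^{2i−2m+1} r^{2m−d} solves u_tt = u_rr + ((d−1)/r) u_r for r > 0. -/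
theorem odd_solution_g_data (d : ℕ) (hd : 3 ≤ d) (hodd : Odd d)
    (i : ℕ) (hi1 : 1 ≤ i) (hi2 : i ≤ d / 4) :
    ∃ a : ℕ → ℝ, a i = 1 ∧ ∀ (t r : ℝ), 0 < r →
      deriv (deriv (fun s : ℝ =>
          ∑ m ∈ Finset.Icc 1 i, a m * s ^ (2 * i - 2 * m + 1) * r ^ ((2 * m : ℤ) - d))) t
        = deriv (deriv (fun ρ : ℝ =>
            ∑ m ∈ Finset.Icc 1 i, a m * t ^ (2 * i - 2 * m + 1) * ρ ^ ((2 * m : ℤ) - d))) r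
          + ((d : ℝ) - 1) / r *
            deriv (fun ρ : ℝ =>
              ∑ m ∈ Finset.Icc 1 i, a m * t ^ (2 * i - 2 * m + 1) * ρ ^ ((2 * m : ℤ) - d)) r := by
  refine ⟨fun m => coefAux d i (i - m), by simp [coefAux], fun t r hr => ?_⟩
  refine key d i _ hi1 (fun m hm => ?_) t r hr
  simpa using coefAux_rec d i m hm
end

section
/- Let d ≥ 3 be odd and 1 ≤ i ≤ [(d+2)/4]. There exist real coefficients b₁, …, b_i with b_i = 1 such that u(t, r) = ∑_{m=1}^i b_m t^{2i−2m} r^{2m−d} satisfies the radial wave equation u_{tt} = u_{rr} + ((d−1)/r) u_r for all t ∈ ℝ and r > 0; moreover u(0, r) = r^{2i−d} and ∂_t u(0, r) = 0. -/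
/-!
On a monomial, `∂_t²` gives `(2i-2m)(2i-2m-1) t^{2i-2m-2} r^{2m-d}` and the radial Laplacian
`∂_r² + ((d-1)/r) ∂_r` gives `(2m-d)(2m-2) t^{2i-2m} r^{2m-d-2}`: the same monomial with `m`
shifted by one. The term `m = i` of the first and `m = 1` of the second vanish, so the equation
reduces to the recursion `b_m (2i-2m)(2i-2m-1) = b_{m+1} (2m+2-d)(2m)`, solved downward from
`b_i = 1`. At `t = 0` only the term `m = i` survives, and `u` is even in `t`.
-/

open Finset

section SumDerivatives

variable {ι : Type*} (S : Finset ι) (a : ι → ℝ)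

theorem deriv_sum_mul_pow (e : ι → ℕ) :
    deriv (fun s : ℝ => ∑ m ∈ S, a m * s ^ e m)
      = fun s => ∑ m ∈ S, a m * e m * s ^ (e m - 1) := by
  funext s
  refine (HasDerivAt.fun_sum fun m _ => (hasDerivAt_pow (e m) s).const_mul (a m)).deriv.trans ?_
  exact sum_congr rfl fun m _ => by ring

theorem deriv_deriv_sum_mul_pow (e : ι → ℕ) (s : ℝ) :
    deriv (deriv fun s : ℝ => ∑ m ∈ S, a m * s ^ e m) s
      = ∑ m ∈ S, a m * (e m * (e m - 1)) * s ^ (e m - 2) := by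
  rw [deriv_sum_mul_pow, deriv_sum_mul_pow]
  refine sum_congr rfl fun m _ => ?_
  rcases Nat.eq_zero_or_pos (e m) with h | h
  · simp [h]
  · rw [Nat.cast_sub h, Nat.sub_sub]
    push_cast
    ring

theorem deriv_sum_mul_pow_zero (e : ι → ℕ) (he : ∀ m ∈ S, e m ≠ 1) :
    deriv (fun s : ℝ => ∑ m ∈ S, a m * s ^ e m) 0 = 0 := by
  rw [deriv_sum_mul_pow]
  refine sum_eq_zero fun m hm => ?_
  rcases Nat.eq_zero_or_pos (e m) with h | h
  · simp [h]
  · rw [zero_pow (by have := he m hm; omega), mul_zero]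

theorem deriv_sum_mul_zpow (e : ι → ℤ) {x : ℝ} (hx : x ≠ 0) :
    deriv (fun ρ : ℝ => ∑ m ∈ S, a m * ρ ^ e m) x
      = ∑ m ∈ S, a m * e m * x ^ (e m - 1) := by
  refine (HasDerivAt.fun_sum fun m _ =>
    (hasDerivAt_zpow (e m) x (Or.inl hx)).const_mul (a m)).deriv.trans ?_
  exact sum_congr rfl fun m _ => by ring

theorem deriv_deriv_sum_mul_zpow (e : ι → ℤ) {x : ℝ} (hx : x ≠ 0) :
    deriv (deriv fun ρ : ℝ => ∑ m ∈ S, a m * ρ ^ e m) x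
      = ∑ m ∈ S, a m * (e m * (e m - 1)) * x ^ (e m - 2) := by
  have hderiv : (deriv fun ρ : ℝ => ∑ m ∈ S, a m * ρ ^ e m)
      =ᶠ[nhds x] fun ρ => ∑ m ∈ S, (a m * e m) * ρ ^ (e m - 1) := by
    filter_upwards [eventually_ne_nhds hx] with ρ hρ using deriv_sum_mul_zpow S a e hρ
  rw [hderiv.deriv_eq, deriv_sum_mul_zpow _ _ _ hx]
  refine sum_congr rfl fun m _ => ?_
  push_cast
  ring_nf

theorem radial_laplacian_sum_mul_zpow (d : ℝ) (e : ι → ℤ) {x : ℝ} (hx : x ≠ 0) :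
    deriv (deriv fun ρ : ℝ => ∑ m ∈ S, a m * ρ ^ e m) x
        + (d - 1) / x * deriv (fun ρ : ℝ => ∑ m ∈ S, a m * ρ ^ e m) x
      = ∑ m ∈ S, a m * (e m * (e m + d - 2)) * x ^ (e m - 2) := by
  rw [deriv_deriv_sum_mul_zpow _ _ _ hx, deriv_sum_mul_zpow _ _ _ hx, mul_sum, ← sum_add_distrib]
  refine sum_congr rfl fun m _ => ?_
  rw [show e m - 1 = e m - 2 + 1 by ring, zpow_add_one₀ hx]
  field_simp
  ring

end SumDerivatives

theorem sum_Icc_one_eq_of_shift {M : Type*} [AddCommMonoid M] {F G : ℕ → M} {i : ℕ}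
    (hF : F i = 0) (hG : G 1 = 0) (hFG : ∀ m ∈ Ico 1 i, F m = G (m + 1)) :
    ∑ m ∈ Icc 1 i, F m = ∑ m ∈ Icc 1 i, G m := by
  rcases Nat.eq_zero_or_pos i with rfl | hi
  · rfl
  rw [← Ico_add_one_right_eq_Icc, sum_Ico_succ_top hi F,
    sum_eq_sum_Ico_succ_bot (by omega : 1 < i + 1) G, ← sum_Ico_add' G 1 i 1, hF, hG, add_zero,
    zero_add]
  exact sum_congr rfl hFG

noncomputable def waveCoeff (d i m : ℕ) : ℝ :=
  ∏ k ∈ Ico m i, (2 * k + 2 - d : ℝ) * (2 * k) / ((2 * i - 2 * k) * (2 * i - 2 * k - 1))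

theorem waveCoeff_self (d i : ℕ) : waveCoeff d i i = 1 := by
  simp [waveCoeff]

theorem waveCoeff_mul {d i m : ℕ} (hm : m < i) :
    waveCoeff d i m * ((2 * i - 2 * m) * (2 * i - 2 * m - 1))
      = waveCoeff d i (m + 1) * ((2 * m + 2 - d) * (2 * m)) := by
  have hgap : (m : ℝ) + 1 ≤ i := by exact_mod_cast hm
  have hden : (2 * i - 2 * m) * (2 * i - 2 * m - 1 : ℝ) ≠ 0 := by nlinarith
  rw [waveCoeff, prod_eq_prod_Ico_succ_bot hm, ← waveCoeff, div_mul_eq_mul_div, mul_assoc,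
    div_mul_cancel₀ _ hden]
  ring

theorem radial_wave_of_coeff_rec (d i : ℕ) (b : ℕ → ℝ)
    (hb : ∀ m ∈ Ico 1 i, b m * ((2 * i - 2 * m) * (2 * i - 2 * m - 1))
      = b (m + 1) * ((2 * m + 2 - d) * (2 * m)))
    (t : ℝ) {r : ℝ} (hr : r ≠ 0) :
    deriv (deriv fun s : ℝ =>
        ∑ m ∈ Icc 1 i, b m * s ^ (2 * i - 2 * m) * r ^ ((2 * m : ℤ) - d)) t
      = deriv (deriv fun ρ : ℝ =>
          ∑ m ∈ Icc 1 i, b m * t ^ (2 * i - 2 * m) * ρ ^ ((2 * m : ℤ) - d)) r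
        + ((d : ℝ) - 1) / r * deriv (fun ρ : ℝ =>
          ∑ m ∈ Icc 1 i, b m * t ^ (2 * i - 2 * m) * ρ ^ ((2 * m : ℤ) - d)) r := by
  conv_lhs => simp only [mul_right_comm (b _)]
  rw [deriv_deriv_sum_mul_pow, radial_laplacian_sum_mul_zpow _ _ _ _ hr]
  apply sum_Icc_one_eq_of_shift
  · simp
  · simp
  · intro m hm
    have hmi := (mem_Ico.1 hm).2
    have ht_exp : 2 * i - 2 * (m + 1) = 2 * i - 2 * m - 2 := by omega
    have hr_exp : (2 * (m + 1 : ℕ) : ℤ) - d - 2 = 2 * m - d := by push_cast; ring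
    rw [ht_exp, hr_exp, Nat.cast_sub (by omega : 2 * m ≤ 2 * i)]
    push_cast
    linear_combination (t ^ (2 * i - 2 * m - 2) * r ^ ((2 * m : ℤ) - d)) * hb m hm

theorem odd_solution_f_data_general (d : ℕ)
    (i : ℕ) (hi1 : 1 ≤ i) :
    ∃ b : ℕ → ℝ, b i = 1 ∧
      (∀ (t r : ℝ), 0 < r →
        deriv (deriv (fun s : ℝ =>
            ∑ m ∈ Finset.Icc 1 i, b m * s ^ (2 * i - 2 * m) * r ^ ((2 * m : ℤ) - d))) t
          = deriv (deriv (fun ρ : ℝ =>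
              ∑ m ∈ Finset.Icc 1 i, b m * t ^ (2 * i - 2 * m) * ρ ^ ((2 * m : ℤ) - d))) r
            + ((d : ℝ) - 1) / r *
              deriv (fun ρ : ℝ =>
                ∑ m ∈ Finset.Icc 1 i, b m * t ^ (2 * i - 2 * m) * ρ ^ ((2 * m : ℤ) - d)) r) ∧
      (∀ r : ℝ, 0 < r →
        (∑ m ∈ Finset.Icc 1 i, b m * (0 : ℝ) ^ (2 * i - 2 * m) * r ^ ((2 * m : ℤ) - d))
            = r ^ ((2 * i : ℤ) - d) ∧
          deriv (fun s : ℝ =>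
            ∑ m ∈ Finset.Icc 1 i, b m * s ^ (2 * i - 2 * m) * r ^ ((2 * m : ℤ) - d)) 0 = 0) := by
  refine ⟨waveCoeff d i, waveCoeff_self d i, fun t r hr =>
    radial_wave_of_coeff_rec d i _ (fun m hm => waveCoeff_mul (mem_Ico.1 hm).2) t hr.ne',
    fun r _ => ⟨?_, ?_⟩⟩
  · rw [sum_eq_single_of_mem i (mem_Icc.2 ⟨hi1, le_rfl⟩) fun m hm hmi => ?_]
    · simp [waveCoeff_self]
    · rw [zero_pow (by have := mem_Icc.1 hm; omega), mul_zero, zero_mul]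
  · simp only [mul_right_comm (waveCoeff d i _)]
    exact deriv_sum_mul_pow_zero _ _ _ fun m _ => by omega

/-- For odd d ≥ 3 and 1 ≤ i ≤ ⌊(d+2)/4⌋, there are coefficients b₁,…,b_i with b_i = 1 so that
u(t,r) = ∑_{m=1}^i b_m t^{2i−2m} r^{2m−d} solves u_tt = u_rr + ((d−1)/r) u_r for r > 0,
with data u(0,r) = r^{2i−d} and ∂_t u(0,r) = 0. -/
theorem odd_solution_f_data (d : ℕ) (hd : 3 ≤ d) (hodd : Odd d)
    (i : ℕ) (hi1 : 1 ≤ i) (hi2 : i ≤ (d + 2) / 4) :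
    ∃ b : ℕ → ℝ, b i = 1 ∧
      (∀ (t r : ℝ), 0 < r →
        deriv (deriv (fun s : ℝ =>
            ∑ m ∈ Finset.Icc 1 i, b m * s ^ (2 * i - 2 * m) * r ^ ((2 * m : ℤ) - d))) t
          = deriv (deriv (fun ρ : ℝ =>
              ∑ m ∈ Finset.Icc 1 i, b m * t ^ (2 * i - 2 * m) * ρ ^ ((2 * m : ℤ) - d))) r
            + ((d : ℝ) - 1) / r *
              deriv (fun ρ : ℝ =>
                ∑ m ∈ Finset.Icc 1 i, b m * t ^ (2 * i - 2 * m) * ρ ^ ((2 * m : ℤ) - d)) r) ∧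
      (∀ r : ℝ, 0 < r →
        (∑ m ∈ Finset.Icc 1 i, b m * (0 : ℝ) ^ (2 * i - 2 * m) * r ^ ((2 * m : ℤ) - d))
            = r ^ ((2 * i : ℤ) - d) ∧
          deriv (fun s : ℝ =>
            ∑ m ∈ Finset.Icc 1 i, b m * s ^ (2 * i - 2 * m) * r ^ ((2 * m : ℤ) - d)) 0 = 0) :=
  odd_solution_f_data_general d i hi1
end

section
/- Let κ : ℝ → ℝ be a smooth, even, nonnegative function supported in [−1,1] with ∫κ = 1, and κ_ε(x) = ε^{−1}κ(x/ε). Fix R > 0, integers i, j ≥ 1, and a ∈ {0,1}. Then for every φ ∈ C_0^∞((0,∞)²): lim_{ε→0} ∬_{r₁,r₂>0} [∫_{−R}^R (κ_ε * (ξ^i χ_{(−1,1)}))(ξ/r₁) · (κ_ε * (ξ^j χ_{(−1,1)}))(ξ/r₂) dξ] φ(r₁,r₂) dr₁dr₂ = (1 − (−1)^{i+j+1}) ∬_{r₁,r₂>0} (min(r₁,r₂,R)^{i+j+1} / ((i+j+1) r₁^i r₂^j)) φ(r₁,r₂) dr₁dr₂. -/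
open MeasureTheory Set Filter Topology

open scoped Convolution

namespace MollChiChi

noncomputable def fpow (n : ℕ) : ℝ → ℝ := Set.indicator (Set.Ioo (-1 : ℝ) 1) (fun t => t ^ n)

lemma fpow_abs_le (n : ℕ) (x : ℝ) : |fpow n x| ≤ 1 := by
  unfold fpow
  by_cases h : x ∈ Set.Ioo (-1:ℝ) 1
  · rw [Set.indicator_of_mem h]
    have hx : |x| ≤ 1 := abs_le.2 ⟨h.1.le, h.2.le⟩
    calc |x ^ n| = |x| ^ n := abs_pow x n
      _ ≤ 1 := pow_le_one₀ (abs_nonneg x) hx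
  · rw [Set.indicator_of_notMem h]; norm_num

lemma fpow_meas (n : ℕ) : Measurable (fpow n) :=
  (measurable_id.pow_const n).indicator measurableSet_Ioo

lemma fpow_integrable (n : ℕ) : Integrable (fpow n) := by
  unfold fpow
  rw [integrable_indicator_iff measurableSet_Ioo]
  exact ((continuous_pow n).integrableOn_Icc).mono_set Set.Ioo_subset_Icc_self

section Kernel
variable {κ : ℝ → ℝ}

lemma K_cont (hκ : Continuous κ) (ε : ℝ) : Continuous (fun x => ε⁻¹ * κ (x / ε)) :=
  continuous_const.mul (hκ.comp (continuous_id.div_const ε))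

lemma K_supp (hκsupp : Function.support κ ⊆ Set.Icc (-1) 1) {ε : ℝ} (hε : 0 < ε) :
    Function.support (fun x => ε⁻¹ * κ (x / ε)) ⊆ Set.Icc (-ε) ε := by
  intro x hx
  have hx' : κ (x / ε) ≠ 0 := by
    intro h; apply hx; simp [h]
  have h1 := hκsupp hx'
  have h2 : -1 ≤ x / ε := h1.1
  have h3 : x / ε ≤ 1 := h1.2
  constructor
  · have := (le_div_iff₀ hε).1 h2
    linarith
  · exact (div_le_one hε).1 h3

lemma K_hcs (hκsupp : Function.support κ ⊆ Set.Icc (-1) 1) {ε : ℝ} (hε : 0 < ε) :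
    HasCompactSupport (fun x => ε⁻¹ * κ (x / ε)) := by
  apply HasCompactSupport.intro (isCompact_Icc (a := -ε) (b := ε))
  intro x hx
  by_contra h
  exact hx (K_supp hκsupp hε h)

lemma K_nonneg (hκnonneg : ∀ x, 0 ≤ κ x) {ε : ℝ} (hε : 0 < ε) (x : ℝ) :
    0 ≤ ε⁻¹ * κ (x / ε) := mul_nonneg (inv_nonneg.2 hε.le) (hκnonneg _)

lemma K_integral (hκint : (∫ x, κ x) = 1) {ε : ℝ} (hε : 0 < ε) :
    (∫ x : ℝ, ε⁻¹ * κ (x / ε)) = 1 := by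
  rw [MeasureTheory.integral_const_mul, Measure.integral_comp_div κ ε, smul_eq_mul, abs_of_pos hε, hκint]
  field_simp

lemma K_integrable (hκ : Continuous κ) (hκsupp : Function.support κ ⊆ Set.Icc (-1) 1)
    {ε : ℝ} (hε : 0 < ε) : Integrable (fun x : ℝ => ε⁻¹ * κ (x / ε)) :=
  (K_cont hκ ε).integrable_of_hasCompactSupport (K_hcs hκsupp hε)

/-- The mollified function as a convolution. -/
lemma g_eq_conv (f : ℝ → ℝ) (ε y : ℝ) :
    (∫ s, ε⁻¹ * κ ((y - s) / ε) * f s) =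
    ((fun x => ε⁻¹ * κ (x / ε)) ⋆[ContinuousLinearMap.lsmul ℝ ℝ, volume] f) y := by
  rw [convolution_def]
  rw [← integral_sub_left_eq_self (fun t => (ContinuousLinearMap.lsmul ℝ ℝ)
      (ε⁻¹ * κ (t / ε)) (f (y - t))) volume y]
  congr 1
  ext s
  simp [ContinuousLinearMap.lsmul_apply, smul_eq_mul]

lemma g_cont (hκ : Continuous κ) (hκsupp : Function.support κ ⊆ Set.Icc (-1) 1)
    {ε : ℝ} (hε : 0 < ε) (n : ℕ) :
    Continuous (fun y => ∫ s, ε⁻¹ * κ ((y - s) / ε) * fpow n s) := by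
  have : (fun y => ∫ s, ε⁻¹ * κ ((y - s) / ε) * fpow n s) =
      ((fun x => ε⁻¹ * κ (x / ε)) ⋆[ContinuousLinearMap.lsmul ℝ ℝ, volume] fpow n) := by
    ext y; exact g_eq_conv (fpow n) ε y
  rw [this]
  exact (K_hcs hκsupp hε).continuous_convolution_left _ (K_cont hκ ε)
    (fpow_integrable n).locallyIntegrable

lemma g_bound (hκ : Continuous κ) (hκsupp : Function.support κ ⊆ Set.Icc (-1) 1)
    (hκnonneg : ∀ x, 0 ≤ κ x) (hκint : (∫ x, κ x) = 1)
    {ε : ℝ} (hε : 0 < ε) (n : ℕ) (y : ℝ) :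
    |∫ s, ε⁻¹ * κ ((y - s) / ε) * fpow n s| ≤ 1 := by
  have hKi : Integrable (fun s : ℝ => ε⁻¹ * κ ((y - s) / ε)) :=
    (K_integrable hκ hκsupp hε).comp_sub_left y
  have h1 : |∫ s, ε⁻¹ * κ ((y - s) / ε) * fpow n s|
      ≤ ∫ s, ‖ε⁻¹ * κ ((y - s) / ε) * fpow n s‖ := by
    simpa using norm_integral_le_integral_norm (fun s => ε⁻¹ * κ ((y - s) / ε) * fpow n s)
  have h2 : (∫ s, ‖ε⁻¹ * κ ((y - s) / ε) * fpow n s‖)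
      ≤ ∫ s, ε⁻¹ * κ ((y - s) / ε) := by
    apply integral_mono_of_nonneg (Eventually.of_forall fun s => norm_nonneg _) hKi
    apply Eventually.of_forall
    intro s
    have hK0 : 0 ≤ ε⁻¹ * κ ((y - s) / ε) := K_nonneg hκnonneg hε _
    calc ‖ε⁻¹ * κ ((y - s) / ε) * fpow n s‖
        = (ε⁻¹ * κ ((y - s) / ε)) * |fpow n s| := by
          rw [Real.norm_eq_abs, abs_mul, abs_of_nonneg hK0]
      _ ≤ (ε⁻¹ * κ ((y - s) / ε)) * 1 := by
          exact mul_le_mul_of_nonneg_left (fpow_abs_le n s) hK0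
      _ = ε⁻¹ * κ ((y - s) / ε) := mul_one _
  have h3 : (∫ s, ε⁻¹ * κ ((y - s) / ε)) = 1 := by
    rw [integral_sub_left_eq_self (fun t => ε⁻¹ * κ (t / ε)) volume y]
    exact K_integral hκint hε
  linarith

lemma fpow_contAt (n : ℕ) {y : ℝ} (hy1 : y ≠ 1) (hy2 : y ≠ -1) :
    ContinuousAt (fpow n) y := by
  by_cases h : y ∈ Set.Ioo (-1:ℝ) 1
  · have hmem : Set.Ioo (-1:ℝ) 1 ∈ 𝓝 y := isOpen_Ioo.mem_nhds h
    apply (continuous_pow n).continuousAt.congr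
    filter_upwards [hmem] with t ht
    exact (Set.indicator_of_mem ht _).symm
  · have h' : y ∈ (Set.Icc (-1:ℝ) 1)ᶜ := by
      intro hmem
      rcases lt_or_eq_of_le hmem.1 with h1 | h1
      · rcases lt_or_eq_of_le hmem.2 with h2 | h2
        · exact h ⟨h1, h2⟩
        · exact hy1 h2
      · exact hy2 h1.symm
    have hmem : (Set.Icc (-1:ℝ) 1)ᶜ ∈ 𝓝 y := (isClosed_Icc.isOpen_compl).mem_nhds h'
    apply continuousAt_const.congr (f := fun _ => (0:ℝ))
    filter_upwards [hmem] with t ht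
    have : t ∉ Set.Ioo (-1:ℝ) 1 := fun hc => ht ⟨hc.1.le, hc.2.le⟩
    exact (Set.indicator_of_notMem this _).symm

lemma g_tendsto (hκ : Continuous κ) (hκsupp : Function.support κ ⊆ Set.Icc (-1) 1)
    (hκnonneg : ∀ x, 0 ≤ κ x) (hκint : (∫ x, κ x) = 1)
    (n : ℕ) {y : ℝ} (hy1 : y ≠ 1) (hy2 : y ≠ -1) :
    Tendsto (fun ε : ℝ => ∫ s, ε⁻¹ * κ ((y - s) / ε) * fpow n s) (𝓝[>] 0)
      (𝓝 (fpow n y)) := by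
  have heq : ∀ ε : ℝ, (∫ s, ε⁻¹ * κ ((y - s) / ε) * fpow n s) =
      ((fun x => ε⁻¹ * κ (x / ε)) ⋆[ContinuousLinearMap.lsmul ℝ ℝ, volume] fpow n) y :=
    fun ε => g_eq_conv (fpow n) ε y
  simp only [heq]
  have hpos : ∀ᶠ ε : ℝ in 𝓝[>] 0, 0 < ε := eventually_mem_nhdsWithin
  apply convolution_tendsto_right (l := 𝓝[>] (0:ℝ))
    (φ := fun ε x => ε⁻¹ * κ (x / ε)) (g := fun _ => fpow n) (k := fun _ => y)
  · filter_upwards [hpos] with ε hε x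
    exact K_nonneg hκnonneg hε x
  · filter_upwards [hpos] with ε hε
    exact K_integral hκint hε
  · rw [tendsto_smallSets_iff]
    intro t ht
    rcases Metric.mem_nhds_iff.1 ht with ⟨δ, hδ, hball⟩
    have : Set.Ioo (0:ℝ) δ ∈ 𝓝[>] (0:ℝ) := Ioo_mem_nhdsGT_of_mem ⟨le_refl _, hδ⟩
    filter_upwards [this] with ε hε
    refine (K_supp hκsupp hε.1).trans ?_
    refine Set.Subset.trans ?_ hball
    intro x hx
    rw [Metric.mem_ball, Real.dist_eq, sub_zero]
    have : |x| ≤ ε := abs_le.2 ⟨hx.1, hx.2⟩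
    exact lt_of_le_of_lt this hε.2
  · exact Eventually.of_forall fun _ => (fpow_meas n).aestronglyMeasurable
  · have : ContinuousAt (fpow n) y := fpow_contAt n hy1 hy2
    exact this.tendsto.comp tendsto_snd
  · exact tendsto_const_nhds

end Kernel
lemma fpow_scale (n : ℕ) {r : ℝ} (hr : 0 < r) (ξ : ℝ) :
    fpow n (ξ / r) = Set.indicator (Set.Ioo (-r) r) (fun x => (x / r) ^ n) ξ := by
  unfold fpow
  by_cases h : ξ ∈ Set.Ioo (-r) r
  · have h' : ξ / r ∈ Set.Ioo (-1:ℝ) 1 :=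
      ⟨by rw [lt_div_iff₀ hr]; linarith [h.1], by rw [div_lt_one hr]; exact h.2⟩
    rw [Set.indicator_of_mem h', Set.indicator_of_mem h]
  · have h' : ξ / r ∉ Set.Ioo (-1:ℝ) 1 := by
      intro hc
      apply h
      have hc1 := hc.1; have hc2 := hc.2
      rw [lt_div_iff₀ hr] at hc1
      rw [div_lt_one hr] at hc2
      exact ⟨by linarith, hc2⟩
    rw [Set.indicator_of_notMem h', Set.indicator_of_notMem h]

lemma limit_integral (i j : ℕ) {r₁ r₂ R : ℝ} (h1 : 0 < r₁) (h2 : 0 < r₂) (hR : 0 < R) :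
    (∫ ξ in Set.Ioc (-R) R, fpow i (ξ / r₁) * fpow j (ξ / r₂))
      = (1 - (-1:ℝ)^(i+j+1)) *
        (min (min r₁ r₂) R ^ (i+j+1) / (((i:ℝ) + j + 1) * r₁^i * r₂^j)) := by
  set m := min r₁ r₂ with hm
  have hm0 : 0 < m := lt_min h1 h2
  set M := min m R with hMdef
  have hM0 : 0 < M := lt_min hm0 hR
  have hinteg : ∀ ξ, fpow i (ξ / r₁) * fpow j (ξ / r₂)
      = Set.indicator (Set.Ioo (-m) m) (fun x => (x / r₁)^i * (x / r₂)^j) ξ := by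
    intro ξ
    rw [fpow_scale i h1, fpow_scale j h2, ← Set.inter_indicator_mul]
    congr 1
    rw [Set.Ioo_inter_Ioo]
    congr 1
    rcases le_total r₁ r₂ with h | h <;> simp [hm, min_eq_left, min_eq_right, h]
  simp only [hinteg]
  rw [setIntegral_indicator measurableSet_Ioo]
  have hstep : (∫ ξ in Set.Ioc (-R) R ∩ Set.Ioo (-m) m, (ξ / r₁)^i * (ξ / r₂)^j)
      = ∫ ξ in Set.Ioc (-M) M, (ξ / r₁)^i * (ξ / r₂)^j := by
    rcases le_or_gt m R with h | h
    · have hMm : M = m := min_eq_left h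
      have hsub : Set.Ioo (-m) m ⊆ Set.Ioc (-R) R := by
        intro x hx
        exact ⟨by linarith [hx.1], by linarith [hx.2]⟩
      rw [Set.inter_eq_self_of_subset_right hsub, hMm]
      exact (integral_Ioc_eq_integral_Ioo).symm
    · have hMm : M = R := min_eq_right h.le
      have hsub : Set.Ioc (-R) R ⊆ Set.Ioo (-m) m := by
        intro x hx
        exact ⟨by linarith [hx.1], by linarith [hx.2]⟩
      rw [Set.inter_eq_self_of_subset_left hsub, hMm]
  rw [hstep]
  have hpt : ∀ ξ : ℝ, (ξ / r₁)^i * (ξ / r₂)^j = (r₁^i * r₂^j)⁻¹ * ξ^(i+j) := by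
    intro ξ
    rw [div_pow, div_pow, pow_add]
    field_simp
  simp only [hpt]
  rw [← intervalIntegral.integral_of_le (by linarith : -M ≤ M)]
  rw [intervalIntegral.integral_const_mul, integral_pow]
  have hne1 : r₁ ^ i ≠ 0 := pow_ne_zero _ h1.ne'
  have hne2 : r₂ ^ j ≠ 0 := pow_ne_zero _ h2.ne'
  have hne3 : ((i:ℝ) + j + 1) ≠ 0 := by positivity
  have hneg : (-M) ^ (i + j + 1) = (-1:ℝ)^(i+j+1) * M^(i+j+1) := by
    rw [neg_pow]
  rw [hneg]
  push_cast
  field_simp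

lemma fpow_apply (n : ℕ) (s : ℝ) :
    Set.indicator (Set.Ioo (-1 : ℝ) 1) (fun t => t ^ n) s = fpow n s := rfl

lemma xi_tendsto {κ : ℝ → ℝ} (hκ : Continuous κ)
    (hκsupp : Function.support κ ⊆ Set.Icc (-1) 1)
    (hκnonneg : ∀ x, 0 ≤ κ x) (hκint : (∫ x, κ x) = 1)
    (i j : ℕ) {R r₁ r₂ : ℝ} (hR : 0 < R) (h1 : 0 < r₁) (h2 : 0 < r₂) :
    Tendsto (fun ε : ℝ => ∫ ξ in (-R)..R,
        (∫ s, ε⁻¹ * κ ((ξ / r₁ - s) / ε) * fpow i s) *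
        (∫ s, ε⁻¹ * κ ((ξ / r₂ - s) / ε) * fpow j s))
      (𝓝[>] 0)
      (𝓝 ((1 - (-1:ℝ)^(i+j+1)) *
        (min (min r₁ r₂) R ^ (i+j+1) / (((i:ℝ) + j + 1) * r₁^i * r₂^j)))) := by
  have hRR : -R ≤ R := by linarith
  simp only [intervalIntegral.integral_of_le hRR]
  rw [← limit_integral i j h1 h2 hR]
  apply tendsto_integral_filter_of_dominated_convergence (fun _ => (1:ℝ))
  · filter_upwards [eventually_mem_nhdsWithin] with ε (hε : (0:ℝ) < ε)
    have hcont : Continuous (fun ξ =>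
        (∫ s, ε⁻¹ * κ ((ξ / r₁ - s) / ε) * fpow i s) *
        (∫ s, ε⁻¹ * κ ((ξ / r₂ - s) / ε) * fpow j s)) := by
      exact ((g_cont hκ hκsupp hε i).comp (continuous_id.div_const r₁)).mul
        ((g_cont hκ hκsupp hε j).comp (continuous_id.div_const r₂))
    exact hcont.aestronglyMeasurable.restrict
  · filter_upwards [eventually_mem_nhdsWithin] with ε (hε : (0:ℝ) < ε)
    apply Eventually.of_forall
    intro ξ
    rw [Real.norm_eq_abs, abs_mul]
    exact mul_le_one₀ (g_bound hκ hκsupp hκnonneg hκint hε i _) (abs_nonneg _)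
      (g_bound hκ hκsupp hκnonneg hκint hε j _)
  · exact integrableOn_const measure_Ioc_lt_top.ne
  · have hfin : ({r₁, -r₁, r₂, -r₂} : Set ℝ).Finite := Set.toFinite _
    have hnull : ∀ᵐ ξ : ℝ, ξ ∉ ({r₁, -r₁, r₂, -r₂} : Set ℝ) :=
      measure_eq_zero_iff_ae_notMem.1 (hfin.measure_zero volume)
    filter_upwards [ae_restrict_of_ae hnull] with ξ hξ
    simp only [Set.mem_insert_iff, Set.mem_singleton_iff, not_or] at hξ
    have e1 : ξ / r₁ ≠ 1 := by
      intro h; exact hξ.1 (by field_simp at h; linarith)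
    have e2 : ξ / r₁ ≠ -1 := by
      intro h
      apply hξ.2.1
      have : ξ = -1 * r₁ := by
        rw [← h]; field_simp
      linarith
    have e3 : ξ / r₂ ≠ 1 := by
      intro h; exact hξ.2.2.1 (by field_simp at h; linarith)
    have e4 : ξ / r₂ ≠ -1 := by
      intro h
      apply hξ.2.2.2
      have : ξ = -1 * r₂ := by
        rw [← h]; field_simp
      linarith
    exact (g_tendsto hκ hκsupp hκnonneg hκint i e1 e2).mul
      (g_tendsto hκ hκsupp hκnonneg hκint j e3 e4)

end MollChiChi

open MollChiChi

/-- Mollified limit (χ–χ case): for a normalized bump κ, i, j ≥ 1, R > 0 and a test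
function φ on (0,∞)², the regularized kernel built from ξ^i χ_{(−1,1)} and ξ^j χ_{(−1,1)}
converges to (1 − (−1)^{i+j+1}) min(r₁,r₂,R)^{i+j+1}/((i+j+1) r₁^i r₂^j). -/
theorem mollified_chi_chi (κ : ℝ → ℝ) (hκsmooth : ContDiff ℝ (⊤ : ℕ∞) κ)
    (hκeven : ∀ x, κ (-x) = κ x) (hκnonneg : ∀ x, 0 ≤ κ x)
    (hκmono : ∀ x y : ℝ, 0 ≤ x → x ≤ y → κ y ≤ κ x)
    (hκsupp : Function.support κ ⊆ Set.Icc (-1) 1)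
    (hκint : (∫ x : ℝ, κ x) = 1)
    (R : ℝ) (hR : 0 < R) (i j : ℕ) (hi : 1 ≤ i) (hj : 1 ≤ j)
    (φ : ℝ × ℝ → ℝ) (hφ : ContDiff ℝ (⊤ : ℕ∞) φ) (hφc : HasCompactSupport φ)
    (hφsupp : tsupport φ ⊆ {p : ℝ × ℝ | 0 < p.1 ∧ 0 < p.2}) :
    Tendsto (fun ε : ℝ =>
        ∫ r₁ in Set.Ioi (0 : ℝ), ∫ r₂ in Set.Ioi (0 : ℝ),
          (∫ ξ in (-R)..R,
            (∫ s : ℝ, ε⁻¹ * κ ((ξ / r₁ - s) / ε) *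
              Set.indicator (Set.Ioo (-1 : ℝ) 1) (fun t => t ^ i) s) *
            (∫ s : ℝ, ε⁻¹ * κ ((ξ / r₂ - s) / ε) *
              Set.indicator (Set.Ioo (-1 : ℝ) 1) (fun t => t ^ j) s)) * φ (r₁, r₂))
      (𝓝[>] 0)
      (𝓝 ((1 - (-1 : ℝ) ^ (i + j + 1)) *
        ∫ r₁ in Set.Ioi (0 : ℝ), ∫ r₂ in Set.Ioi (0 : ℝ),
          min (min r₁ r₂) R ^ (i + j + 1) / ((i + j + 1) * r₁ ^ i * r₂ ^ j) * φ (r₁, r₂))) := by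
  have hκc : Continuous κ := hκsmooth.continuous
  have hRR : -R ≤ R := by linarith
  -- the limit kernel
  set G : ℝ → ℝ → ℝ := fun a b => (1 - (-1:ℝ)^(i+j+1)) *
      (min (min a b) R ^ (i+j+1) / (((i:ℝ) + j + 1) * a^i * b^j)) with hG
  -- bound on φ
  obtain ⟨C, hC⟩ := hφc.exists_bound_of_continuous hφ.continuous
  have hC0 : 0 ≤ C := le_trans (norm_nonneg (φ (0,0))) (hC _)
  -- support box for φ
  obtain ⟨ρ, hρ⟩ := hφc.isBounded.subset_closedBall (0 : ℝ × ℝ)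
  have hφ02 : ∀ r₁ r₂ : ℝ, r₂ ∉ Set.Icc (-ρ) ρ → φ (r₁, r₂) = 0 := by
    intro r₁ r₂ hr
    by_contra h
    have hmem : (r₁, r₂) ∈ tsupport φ := subset_tsupport φ h
    have h1 := hρ hmem
    rw [Metric.mem_closedBall, dist_zero_right] at h1
    have h2 : ‖r₂‖ ≤ ρ := le_trans (norm_snd_le ((r₁, r₂) : ℝ × ℝ)) h1
    rw [Real.norm_eq_abs] at h2
    exact hr (by rw [Set.mem_Icc]; exact abs_le.1 h2)
  have hφ01 : ∀ r₁ r₂ : ℝ, r₁ ∉ Set.Icc (-ρ) ρ → φ (r₁, r₂) = 0 := by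
    intro r₁ r₂ hr
    by_contra h
    have hmem : (r₁, r₂) ∈ tsupport φ := subset_tsupport φ h
    have h1 := hρ hmem
    rw [Metric.mem_closedBall, dist_zero_right] at h1
    have h2 : ‖r₁‖ ≤ ρ := le_trans (norm_fst_le ((r₁, r₂) : ℝ × ℝ)) h1
    rw [Real.norm_eq_abs] at h2
    exact hr (by rw [Set.mem_Icc]; exact abs_le.1 h2)
  -- rewrite the goal using fpow and Ioc integrals
  simp only [fpow_apply, intervalIntegral.integral_of_le hRR]
  -- joint measurability of the kernel
  have A_meas : ∀ ε : ℝ, 0 < ε → StronglyMeasurable (fun p : ℝ × ℝ =>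
      ∫ ξ in Set.Ioc (-R) R,
        (∫ s, ε⁻¹ * κ ((ξ / p.1 - s) / ε) * fpow i s) *
        (∫ s, ε⁻¹ * κ ((ξ / p.2 - s) / ε) * fpow j s)) := by
    intro ε hε
    have hSM : StronglyMeasurable (fun q : (ℝ × ℝ) × ℝ =>
        (∫ s, ε⁻¹ * κ ((q.2 / q.1.1 - s) / ε) * fpow i s) *
        (∫ s, ε⁻¹ * κ ((q.2 / q.1.2 - s) / ε) * fpow j s)) := by
      apply Measurable.stronglyMeasurable
      exact (((g_cont hκc hκsupp hε i).measurable).comp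
          (measurable_snd.div (measurable_fst.fst))).mul
        (((g_cont hκc hκsupp hε j).measurable).comp
          (measurable_snd.div (measurable_fst.snd)))
    exact hSM.integral_prod_right'
  -- uniform bound on the ξ-integral
  have habs : ∀ ε : ℝ, 0 < ε → ∀ r₁ r₂ : ℝ,
      ‖∫ ξ in Set.Ioc (-R) R,
        (∫ s, ε⁻¹ * κ ((ξ / r₁ - s) / ε) * fpow i s) *
        (∫ s, ε⁻¹ * κ ((ξ / r₂ - s) / ε) * fpow j s)‖ ≤ 2 * R := by
    intro ε hε r₁ r₂
    have := norm_setIntegral_le_of_norm_le_const_ae' (μ := volume)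
      (s := Set.Ioc (-R) R) (C := 1)
      (f := fun ξ => (∫ s, ε⁻¹ * κ ((ξ / r₁ - s) / ε) * fpow i s) *
        (∫ s, ε⁻¹ * κ ((ξ / r₂ - s) / ε) * fpow j s))
      measure_Ioc_lt_top
      (Eventually.of_forall fun ξ _ => by
        rw [Real.norm_eq_abs, abs_mul]
        exact mul_le_one₀ (g_bound hκc hκsupp hκnonneg hκint hε i _) (abs_nonneg _)
          (g_bound hκc hκsupp hκnonneg hκint hε j _))
    refine le_trans this ?_
    rw [measureReal_def, Real.volume_Ioc, one_mul, ENNReal.toReal_ofReal (by linarith)]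
    linarith
  -- pointwise (in r₂) bound by an integrable function
  have hptbd : ∀ ε : ℝ, 0 < ε → ∀ r₁ r₂ : ℝ,
      ‖(∫ ξ in Set.Ioc (-R) R,
        (∫ s, ε⁻¹ * κ ((ξ / r₁ - s) / ε) * fpow i s) *
        (∫ s, ε⁻¹ * κ ((ξ / r₂ - s) / ε) * fpow j s)) * φ (r₁, r₂)‖
      ≤ Set.indicator (Set.Icc (-ρ) ρ) (fun _ => 2 * R * C) r₂ := by
    intro ε hε r₁ r₂
    by_cases hr : r₂ ∈ Set.Icc (-ρ) ρ
    · rw [Set.indicator_of_mem hr, norm_mul]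
      exact mul_le_mul (habs ε hε r₁ r₂) (hC (r₁, r₂)) (norm_nonneg _) (by linarith)
    · simp [Set.indicator_of_notMem hr, hφ02 r₁ r₂ hr]
  have hbd_int : Integrable (Set.indicator (Set.Icc (-ρ) ρ) (fun _ => 2 * R * C))
      (volume.restrict (Set.Ioi (0:ℝ))) := by
    exact ((integrableOn_const measure_Icc_lt_top.ne).integrable_indicator
      measurableSet_Icc).restrict
  -- the value D₀
  set D₀ : ℝ := ∫ r₂ in Set.Ioi (0:ℝ),
      Set.indicator (Set.Icc (-ρ) ρ) (fun _ => 2 * R * C) r₂ with hD₀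
  -- inner convergence, for fixed r₁ > 0
  have hInner : ∀ r₁ : ℝ, 0 < r₁ →
      Tendsto (fun ε : ℝ => ∫ r₂ in Set.Ioi (0:ℝ),
        (∫ ξ in Set.Ioc (-R) R,
          (∫ s, ε⁻¹ * κ ((ξ / r₁ - s) / ε) * fpow i s) *
          (∫ s, ε⁻¹ * κ ((ξ / r₂ - s) / ε) * fpow j s)) * φ (r₁, r₂))
        (𝓝[>] 0)
        (𝓝 (∫ r₂ in Set.Ioi (0:ℝ), G r₁ r₂ * φ (r₁, r₂))) := by
    intro r₁ hr₁
    apply tendsto_integral_filter_of_dominated_convergence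
      (Set.indicator (Set.Icc (-ρ) ρ) (fun _ => 2 * R * C))
    · filter_upwards [eventually_mem_nhdsWithin] with ε (hε : (0:ℝ) < ε)
      apply AEStronglyMeasurable.restrict
      apply StronglyMeasurable.aestronglyMeasurable
      exact ((A_meas ε hε).comp_measurable
        (measurable_const.prodMk measurable_id)).mul
        ((hφ.continuous.comp (continuous_const.prodMk continuous_id)).stronglyMeasurable)
    · filter_upwards [eventually_mem_nhdsWithin] with ε (hε : (0:ℝ) < ε)
      exact Eventually.of_forall fun r₂ => hptbd ε hε r₁ r₂
    · exact hbd_int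
    · filter_upwards [ae_restrict_mem measurableSet_Ioi] with r₂ hr₂
      have h := xi_tendsto hκc hκsupp hκnonneg hκint i j hR hr₁ hr₂
      simp only [intervalIntegral.integral_of_le hRR] at h
      exact h.mul_const _
  -- vanishing of the inner integral for r₁ outside the support box
  have hH0 : ∀ ε : ℝ, ∀ r₁ : ℝ, r₁ ∉ Set.Icc (-ρ) ρ →
      (∫ r₂ in Set.Ioi (0:ℝ),
        (∫ ξ in Set.Ioc (-R) R,
          (∫ s, ε⁻¹ * κ ((ξ / r₁ - s) / ε) * fpow i s) *
          (∫ s, ε⁻¹ * κ ((ξ / r₂ - s) / ε) * fpow j s)) * φ (r₁, r₂)) = 0 := by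
    intro ε r₁ hr
    have hz : ∀ r₂ : ℝ,
        (∫ ξ in Set.Ioc (-R) R,
          (∫ s, ε⁻¹ * κ ((ξ / r₁ - s) / ε) * fpow i s) *
          (∫ s, ε⁻¹ * κ ((ξ / r₂ - s) / ε) * fpow j s)) * φ (r₁, r₂) = 0 := by
      intro r₂
      rw [hφ01 r₁ r₂ hr, mul_zero]
    rw [integral_congr_ae (Eventually.of_forall hz), integral_zero]
  -- uniform bound on the inner integral
  have hHbound : ∀ ε : ℝ, 0 < ε → ∀ r₁ : ℝ,
      ‖∫ r₂ in Set.Ioi (0:ℝ),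
        (∫ ξ in Set.Ioc (-R) R,
          (∫ s, ε⁻¹ * κ ((ξ / r₁ - s) / ε) * fpow i s) *
          (∫ s, ε⁻¹ * κ ((ξ / r₂ - s) / ε) * fpow j s)) * φ (r₁, r₂)‖
      ≤ Set.indicator (Set.Icc (-ρ) ρ) (fun _ => D₀) r₁ := by
    intro ε hε r₁
    by_cases hr : r₁ ∈ Set.Icc (-ρ) ρ
    · rw [Set.indicator_of_mem hr]
      refine le_trans (norm_integral_le_integral_norm _) ?_
      rw [hD₀]
      exact integral_mono_of_nonneg (Eventually.of_forall fun r₂ => norm_nonneg _)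
        hbd_int (Eventually.of_forall fun r₂ => hptbd ε hε r₁ r₂)
    · simp [hH0 ε r₁ hr, Set.indicator_of_notMem hr]
  -- outer convergence
  have key : Tendsto (fun ε : ℝ =>
      ∫ r₁ in Set.Ioi (0:ℝ), ∫ r₂ in Set.Ioi (0:ℝ),
        (∫ ξ in Set.Ioc (-R) R,
          (∫ s, ε⁻¹ * κ ((ξ / r₁ - s) / ε) * fpow i s) *
          (∫ s, ε⁻¹ * κ ((ξ / r₂ - s) / ε) * fpow j s)) * φ (r₁, r₂))
      (𝓝[>] 0)
      (𝓝 (∫ r₁ in Set.Ioi (0:ℝ), ∫ r₂ in Set.Ioi (0:ℝ), G r₁ r₂ * φ (r₁, r₂))) := by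
    apply tendsto_integral_filter_of_dominated_convergence
      (Set.indicator (Set.Icc (-ρ) ρ) (fun _ => D₀))
    · filter_upwards [eventually_mem_nhdsWithin] with ε (hε : (0:ℝ) < ε)
      apply AEStronglyMeasurable.restrict
      apply StronglyMeasurable.aestronglyMeasurable
      exact ((A_meas ε hε).mul hφ.continuous.stronglyMeasurable).integral_prod_right'
    · filter_upwards [eventually_mem_nhdsWithin] with ε (hε : (0:ℝ) < ε)
      exact Eventually.of_forall fun r₁ => hHbound ε hε r₁
    · exact ((integrableOn_const measure_Icc_lt_top.ne).integrable_indicator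
        measurableSet_Icc).restrict
    · filter_upwards [ae_restrict_mem measurableSet_Ioi] with r₁ hr₁
      exact hInner r₁ hr₁
  -- identify the limit with the stated right-hand side
  have hRHS : ((1 : ℝ) - (-1 : ℝ) ^ (i + j + 1)) *
      (∫ r₁ in Set.Ioi (0:ℝ), ∫ r₂ in Set.Ioi (0:ℝ),
        min (min r₁ r₂) R ^ (i + j + 1) / ((i + j + 1) * r₁ ^ i * r₂ ^ j) * φ (r₁, r₂))
      = ∫ r₁ in Set.Ioi (0:ℝ), ∫ r₂ in Set.Ioi (0:ℝ), G r₁ r₂ * φ (r₁, r₂) := by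
    rw [← MeasureTheory.integral_const_mul]
    apply integral_congr_ae
    apply Eventually.of_forall
    intro r₁
    dsimp only
    rw [← MeasureTheory.integral_const_mul]
    apply integral_congr_ae
    apply Eventually.of_forall
    intro r₂
    dsimp only
    rw [hG]
    ring
  rw [← hRHS] at key
  exact key
end

section
/- Let κ be a smooth, even, nonnegative bump function supported in [−1,1] with ∫κ = 1, and κ_ε(x) = ε^{−1}κ(x/ε). Fix R > 0 and a, b ∈ {0,1}. Then for every φ ∈ C_0^∞((0,∞)²): lim_{ε→0} ∬_{r₁,r₂>0} [∫_{−R}^R κ_ε(ξ/r₁ − (−1)^a) · κ_ε(ξ/r₂ − (−1)^b) dξ] φ(r₁, r₂) dr₁ dr₂ = δ_{ab} ∫_0^R ξ² φ(ξ, ξ) dξ, where δ_{ab} is the Kronecker delta. -/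
open MeasureTheory Set Filter Topology


lemma kappa_zero {κ : ℝ → ℝ} (hκsupp : Function.support κ ⊆ Set.Icc (-1) 1)
    {x : ℝ} (hx : x ∉ Set.Icc (-1:ℝ) 1) : κ x = 0 := by
  by_contra h; exact hx (hκsupp h)

/-- Change of variables r = ξ/(1+εu) in the mollified integral. -/

lemma subst_lemma {κ : ℝ → ℝ} (hκsupp : Function.support κ ⊆ Set.Icc (-1) 1)
    {ξ ε : ℝ} (hξ : 0 < ξ) (hε : 0 < ε) (hε2 : ε < 1/2) (g : ℝ → ℝ) :
    ∫ r in Set.Ioi (0:ℝ), ε⁻¹ * κ ((ξ/r - 1)/ε) * g r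
      = ∫ u : ℝ, ξ/(1+ε*u)^2 * κ u * g (ξ/(1+ε*u)) := by
  have hεne : ε ≠ 0 := ne_of_gt hε
  set s : Set ℝ := Set.Ioi (-ε⁻¹) with hs
  have hεinv : (2:ℝ) < ε⁻¹ := by
    rw [lt_inv_comm₀ (by norm_num) hε]; linarith
  have hpos : ∀ u ∈ s, 0 < 1 + ε*u := by
    intro u hu
    have : -ε⁻¹ < u := hu
    nlinarith [mul_pos hε (by linarith : (0:ℝ) < u + ε⁻¹), mul_inv_cancel₀ hεne]
  have himg : (fun u => ξ/(1+ε*u)) '' s = Set.Ioi (0:ℝ) := by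
    ext r
    constructor
    · rintro ⟨u, hu, rfl⟩
      exact div_pos hξ (hpos u hu)
    · intro hr
      have hr' : (0:ℝ) < r := hr
      refine ⟨(ξ/r - 1)/ε, ?_, ?_⟩
      · have h1 : 0 < ξ/r := div_pos hξ hr'
        show -ε⁻¹ < (ξ/r - 1)/ε
        rw [show -ε⁻¹ = (-1)/ε by field_simp]
        gcongr
        linarith
      · have h2 : 1 + ε*((ξ/r - 1)/ε) = ξ/r := by field_simp; ring
        show ξ/(1+ε*((ξ/r - 1)/ε)) = r
        rw [h2]
        rw [div_div_eq_mul_div, mul_comm, mul_div_assoc, div_self (ne_of_gt hξ), mul_one]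
  have hderiv : ∀ u ∈ s, HasDerivWithinAt (fun u => ξ/(1+ε*u)) (-(ξ*ε)/(1+ε*u)^2) s u := by
    intro u hu
    have h := (hasDerivAt_const u ξ).div
      (((hasDerivAt_id u).const_mul ε).const_add 1) (ne_of_gt (hpos u hu))
    refine HasDerivWithinAt.congr_deriv (f := fun u => ξ/(1+ε*u)) h.hasDerivWithinAt ?_
    simp only [id]; ring
  have hinj : Set.InjOn (fun u => ξ/(1+ε*u)) s := by
    intro u hu v hv h
    simp only at h
    have hu' := hpos u hu
    have hv' := hpos v hv
    rw [div_eq_div_iff (by positivity) (by positivity)] at h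
    have h2 : ε*u = ε*v := by nlinarith
    exact mul_left_cancel₀ hεne h2
  have key := integral_image_eq_integral_abs_deriv_smul measurableSet_Ioi hderiv hinj
    (fun r => ε⁻¹ * κ ((ξ/r - 1)/ε) * g r)
  rw [himg] at key
  rw [key]
  have hcong : ∀ u ∈ s,
      |(-(ξ*ε)/(1+ε*u)^2)| • (ε⁻¹ * κ ((ξ/(ξ/(1+ε*u)) - 1)/ε) * g (ξ/(1+ε*u)))
        = ξ/(1+ε*u)^2 * κ u * g (ξ/(1+ε*u)) := by
    intro u hu
    have hu' := hpos u hu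
    have e1 : ξ/(ξ/(1+ε*u)) = 1+ε*u := by
      rw [div_div_eq_mul_div, mul_comm, mul_div_assoc, div_self (ne_of_gt hξ), mul_one]
    rw [e1]
    have e2 : (1+ε*u - 1)/ε = u := by field_simp; ring
    rw [e2]
    have e3 : |(-(ξ*ε)/(1+ε*u)^2)| = ξ*ε/(1+ε*u)^2 := by
      rw [abs_div, abs_neg, abs_of_pos (by positivity : (0:ℝ) < ξ*ε),
        abs_of_pos (by positivity : (0:ℝ) < (1+ε*u)^2)]
    rw [e3, smul_eq_mul]
    field_simp
  calc ∫ u in s, |(-(ξ*ε)/(1+ε*u)^2)| •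
        ((fun r => ε⁻¹ * κ ((ξ/r - 1)/ε) * g r) ((fun u => ξ/(1+ε*u)) u))
      = ∫ u in s, ξ/(1+ε*u)^2 * κ u * g (ξ/(1+ε*u)) :=
        setIntegral_congr_fun measurableSet_Ioi (fun u hu => hcong u hu)
    _ = ∫ u : ℝ, ξ/(1+ε*u)^2 * κ u * g (ξ/(1+ε*u)) := by
        apply setIntegral_eq_integral_of_forall_compl_eq_zero
        intro u hu
        have hu2 : u ≤ -ε⁻¹ := by simpa [s] using hu
        have : κ u = 0 := kappa_zero hκsupp (by
          simp only [Set.mem_Icc, not_and_or]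
          left; push_neg; linarith)
        simp [this]

lemma kappa_le {κ : ℝ → ℝ} (hκeven : ∀ x, κ (-x) = κ x)
    (hκmono : ∀ x y : ℝ, 0 ≤ x → x ≤ y → κ y ≤ κ x) (x : ℝ) : κ x ≤ κ 0 := by
  rcases le_or_gt 0 x with hx | hx
  · exact hκmono 0 x le_rfl hx
  · rw [← hκeven x]; exact hκmono 0 (-x) le_rfl (by linarith)

lemma phi_bounds {φ : ℝ × ℝ → ℝ} (hφ : Continuous φ) (hφc : HasCompactSupport φ)
    (hφsupp : tsupport φ ⊆ {p : ℝ × ℝ | 0 < p.1 ∧ 0 < p.2}) :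
    ∃ δ M : ℝ, 0 < δ ∧ δ ≤ M ∧
      ∀ p : ℝ × ℝ, φ p ≠ 0 → δ ≤ p.1 ∧ p.1 ≤ M ∧ δ ≤ p.2 ∧ p.2 ≤ M := by
  rcases eq_or_ne φ 0 with h0 | h0
  · exact ⟨1, 1, one_pos, le_rfl, fun p hp => absurd (by simp [h0]) hp⟩
  · have hne : (tsupport φ).Nonempty := by
      rcases Function.ne_iff.1 h0 with ⟨p, hp⟩
      exact ⟨p, subset_tsupport φ hp⟩
    obtain ⟨p₀, hp₀K, hp₀⟩ := hφc.exists_isMinOn hne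
      ((continuous_fst.min continuous_snd).continuousOn)
    obtain ⟨p₁, hp₁K, hp₁⟩ := hφc.exists_isMaxOn hne
      ((continuous_fst.max continuous_snd).continuousOn)
    set δ := min p₀.1 p₀.2 with hδdef
    set M := max (max p₁.1 p₁.2) δ with hMdef
    have hδpos : 0 < δ := lt_min (hφsupp hp₀K).1 (hφsupp hp₀K).2
    refine ⟨δ, M, hδpos, le_max_right _ _, fun p hp => ?_⟩
    have hpK : p ∈ tsupport φ := subset_tsupport φ hp
    have h1 := hp₀ hpK
    have h2 := hp₁ hpK
    simp only [IsMinOn, IsMaxOn] at *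
    have hmin : δ ≤ min p.1 p.2 := h1
    have hmax : max p.1 p.2 ≤ max p₁.1 p₁.2 := h2
    refine ⟨le_trans hmin (min_le_left _ _), ?_, le_trans hmin (min_le_right _ _), ?_⟩
    · exact le_trans (le_trans (le_max_left _ _) hmax) (le_max_left _ _)
    · exact le_trans (le_trans (le_max_right _ _) hmax) (le_max_left _ _)

lemma integrable_of_bdd_supp {α : Type*} [MeasurableSpace α] {μ : Measure α} {g : α → ℝ}
    (hg : AEStronglyMeasurable g μ) {S : Set α} (hS : MeasurableSet S) (hSfin : μ S < ⊤)
    {C : ℝ} (hbd : ∀ x, ‖g x‖ ≤ C) (hsupp : ∀ x, x ∉ S → g x = 0) : Integrable g μ := by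
  refine Integrable.mono' (g := S.indicator (fun _ => C))
    ((integrable_indicator_iff hS).mpr (integrableOn_const hSfin.ne)) hg
    (Filter.Eventually.of_forall fun x => ?_)
  · by_cases hx : x ∈ S
    · rw [indicator_of_mem hx]; exact hbd x
    · rw [indicator_of_notMem hx, hsupp x hx]; simp

lemma sq_bound' {ε u : ℝ} (hε : 0 < ε) (hε2 : ε ≤ 1/2) (h1 : -1 ≤ u) (h2 : u ≤ 1)
    {ξ : ℝ} (hξ : 0 < ξ) : ξ/(1+ε*u)^2 ≤ 4*ξ ∧ 0 < 1+ε*u := by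
  have h3 : (1:ℝ)/2 ≤ 1+ε*u := by nlinarith
  have h4 : (1:ℝ)/4 ≤ (1+ε*u)^2 := by nlinarith [sq_nonneg (1+ε*u - 1/2)]
  refine ⟨?_, by linarith⟩
  rw [div_le_iff₀ (by nlinarith)]
  nlinarith [mul_le_mul_of_nonneg_left h4 hξ.le]

lemma gen_bound {κ : ℝ → ℝ} (hκmax : ∀ x, |κ x| ≤ κ 0)
    (hκsupp : Function.support κ ⊆ Set.Icc (-1) 1)
    {ε ξ C : ℝ} (hε : 0 < ε) (hε2 : ε ≤ 1/2) (hξ : 0 < ξ) (hC : 0 ≤ C)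
    {h : ℝ → ℝ} (hbd : ∀ t, ‖h t‖ ≤ C) :
    ‖∫ t : ℝ, ξ/(1+ε*t)^2 * κ t * h t‖ ≤ 8*ξ*(κ 0)*C := by
  have hκ0 : 0 ≤ κ 0 := le_trans (abs_nonneg _) (hκmax 0)
  have hbd1 : Integrable ((Icc (-1:ℝ) 1).indicator (fun _ => 4*ξ*(κ 0)*C)) := by
    rw [integrable_indicator_iff measurableSet_Icc]
    exact integrableOn_const measure_Icc_lt_top.ne
  refine le_trans (norm_integral_le_integral_norm _) (le_trans
    (integral_mono_of_nonneg (Filter.Eventually.of_forall (fun t => norm_nonneg _)) hbd1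
      (Filter.Eventually.of_forall (fun t => ?_))) ?_)
  · show ‖ξ/(1+ε*t)^2 * κ t * h t‖ ≤ (Icc (-1:ℝ) 1).indicator (fun _ => 4*ξ*(κ 0)*C) t
    by_cases ht : t ∈ Icc (-1:ℝ) 1
    · rw [indicator_of_mem ht]
      obtain ⟨hb, hp⟩ := sq_bound' hε hε2 ht.1 ht.2 hξ
      have b1 : |ξ/(1+ε*t)^2| ≤ 4*ξ := by
        rw [abs_of_pos (div_pos hξ (by positivity))]; exact hb
      rw [norm_mul, norm_mul]
      exact mul_le_mul (mul_le_mul b1 (hκmax t) (abs_nonneg _) (by positivity))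
        (hbd t) (norm_nonneg _) (by positivity)
    · rw [indicator_of_notMem ht, kappa_zero hκsupp ht]
      simp
  · rw [integral_indicator_const _ measurableSet_Icc]
    have hv2 : (volume (Icc (-1:ℝ) 1)).toReal = 2 := by
      simp [Real.volume_Icc]; norm_num
    rw [measureReal_def, hv2, smul_eq_mul]
    ring_nf
    exact le_of_eq (by ring)

lemma sq_bound {ε u : ℝ} (hε : 0 < ε) (hε2 : ε ≤ 1/2) (h1 : -1 ≤ u) (h2 : u ≤ 1)
    {ξ : ℝ} (hξ : 0 < ξ) : ξ/(1+ε*u)^2 ≤ 4*ξ ∧ 0 < 1+ε*u := by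
  have h3 : (1:ℝ)/2 ≤ 1+ε*u := by nlinarith
  have h4 : (1:ℝ)/4 ≤ (1+ε*u)^2 := by nlinarith [sq_nonneg (1+ε*u - 1/2)]
  refine ⟨?_, by linarith⟩
  rw [div_le_iff₀ (by nlinarith)]
  nlinarith [mul_le_mul_of_nonneg_left h4 hξ.le]

lemma cont_aux {ξ u : ℝ} : Tendsto (fun ε : ℝ => ξ/(1+ε*u)^2) (𝓝[>] 0) (𝓝 ξ) := by
  have h : ContinuousAt (fun ε : ℝ => ξ/(1+ε*u)^2) 0 := by
    apply ContinuousAt.div continuousAt_const (by fun_prop)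
    norm_num
  have h2 : Tendsto (fun ε : ℝ => ξ/(1+ε*u)^2) (𝓝[>] 0) (𝓝 (ξ/(1+0*u)^2)) :=
    h.tendsto.mono_left nhdsWithin_le_nhds
  simpa using h2

lemma pointwise_limit {κ : ℝ → ℝ} (hκcont : Continuous κ)
    (hκmax : ∀ x, |κ x| ≤ κ 0)
    (hκsupp : Function.support κ ⊆ Set.Icc (-1) 1)
    (hκint : (∫ x : ℝ, κ x) = 1)
    {φ : ℝ × ℝ → ℝ} (hφcont : Continuous φ)
    {Cφ : ℝ} (hCφ : ∀ p, ‖φ p‖ ≤ Cφ)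
    {ξ : ℝ} (hξ : 0 < ξ) :
    Tendsto (fun ε : ℝ => ∫ u : ℝ, ξ/(1+ε*u)^2 * κ u *
        (∫ v : ℝ, ξ/(1+ε*v)^2 * κ v * φ (ξ/(1+ε*u), ξ/(1+ε*v))))
      (𝓝[>] 0) (𝓝 (ξ^2 * φ (ξ, ξ))) := by
  have hκ0 : 0 ≤ κ 0 := le_trans (abs_nonneg _) (hκmax 0)
  have hCφ0 : 0 ≤ Cφ := le_trans (norm_nonneg _) (hCφ (ξ, ξ))
  have hev : ∀ᶠ ε in 𝓝[>] (0:ℝ), ε ∈ Ioo (0:ℝ) (1/2) :=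
    Ioo_mem_nhdsGT_of_mem (by constructor <;> norm_num)
  set C1 : ℝ := 4*ξ*(κ 0)*Cφ with hC1
  have hC1nn : 0 ≤ C1 := by positivity
  have hbd1 : Integrable ((Icc (-1:ℝ) 1).indicator (fun _ => C1)) := by
    rw [integrable_indicator_iff measurableSet_Icc]
    exact integrableOn_const measure_Icc_lt_top.ne
  -- generic pointwise bound
  have hbd : ∀ ε ∈ Ioo (0:ℝ) (1/2), ∀ (x v : ℝ),
      ‖ξ/(1+ε*v)^2 * κ v * φ (x, ξ/(1+ε*v))‖
        ≤ (Icc (-1:ℝ) 1).indicator (fun _ => C1) v := by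
    intro ε hε x v
    by_cases hv : v ∈ Icc (-1:ℝ) 1
    · rw [indicator_of_mem hv]
      obtain ⟨hb, hp⟩ := sq_bound hε.1 hε.2.le hv.1 hv.2 hξ
      have b1 : |ξ/(1+ε*v)^2| ≤ 4*ξ := by
        rw [abs_of_pos (div_pos hξ (by positivity))]; exact hb
      rw [norm_mul, norm_mul]
      exact mul_le_mul (mul_le_mul b1 (hκmax v) (abs_nonneg _) (by positivity))
        (hCφ _) (norm_nonneg _) (by positivity)
    · rw [indicator_of_notMem hv, kappa_zero hκsupp hv]
      simp
  -- bound on the inner integral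
  have hJbd : ∀ ε ∈ Ioo (0:ℝ) (1/2), ∀ (x : ℝ),
      ‖∫ v : ℝ, ξ/(1+ε*v)^2 * κ v * φ (x, ξ/(1+ε*v))‖ ≤ 2*C1 := by
    intro ε hε x
    refine le_trans (norm_integral_le_integral_norm _) (le_trans
      (integral_mono_of_nonneg (Filter.Eventually.of_forall (fun v => norm_nonneg _))
        hbd1 (Filter.Eventually.of_forall (fun v => hbd ε hε x v))) ?_)
    rw [integral_indicator_const _ measurableSet_Icc]
    have hv2 : (volume (Icc (-1:ℝ) 1)).toReal = 2 := by
      simp [Real.volume_Icc]; norm_num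
    rw [measureReal_def, hv2, smul_eq_mul]
  -- inner convergence
  have hinner : ∀ u : ℝ, Tendsto (fun ε : ℝ =>
      ∫ v : ℝ, ξ/(1+ε*v)^2 * κ v * φ (ξ/(1+ε*u), ξ/(1+ε*v)))
      (𝓝[>] 0) (𝓝 (ξ * φ (ξ, ξ))) := by
    intro u
    have key := tendsto_integral_filter_of_dominated_convergence
      (μ := volume) (l := 𝓝[>] (0:ℝ))
      (F := fun ε v => ξ/(1+ε*v)^2 * κ v * φ (ξ/(1+ε*u), ξ/(1+ε*v)))
      (f := fun v => ξ * κ v * φ (ξ, ξ))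
      ((Icc (-1:ℝ) 1).indicator (fun _ => C1))
      (Filter.Eventually.of_forall (fun ε =>
        (by fun_prop : Measurable (fun v : ℝ => ξ/(1+ε*v)^2 * κ v * φ (ξ/(1+ε*u), ξ/(1+ε*v)))).aestronglyMeasurable))
      (by filter_upwards [hev] with ε hε
          exact Filter.Eventually.of_forall (fun v => hbd ε hε _ v))
      hbd1
      (Filter.Eventually.of_forall (fun v => by
        have t1 : Tendsto (fun ε : ℝ => ξ/(1+ε*v)^2) (𝓝[>] 0) (𝓝 ξ) := cont_aux
        have t2 : Tendsto (fun ε : ℝ => φ (ξ/(1+ε*u), ξ/(1+ε*v))) (𝓝[>] 0) (𝓝 (φ (ξ, ξ))) := by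
          have hc : ContinuousAt (fun ε : ℝ => φ (ξ/(1+ε*u), ξ/(1+ε*v))) 0 := by
            apply hφcont.continuousAt.comp
            apply ContinuousAt.prodMk
            · exact ContinuousAt.div continuousAt_const (by fun_prop) (by norm_num)
            · exact ContinuousAt.div continuousAt_const (by fun_prop) (by norm_num)
          have h2' : Tendsto (fun ε : ℝ => φ (ξ/(1+ε*u), ξ/(1+ε*v))) (𝓝[>] 0)
              (𝓝 (φ (ξ/(1+0*u), ξ/(1+0*v)))) := hc.tendsto.mono_left nhdsWithin_le_nhds
          simpa using h2'
        simpa using (t1.mul tendsto_const_nhds).mul t2))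
    have hval : (∫ v : ℝ, ξ * κ v * φ (ξ, ξ)) = ξ * φ (ξ, ξ) := by
      have : (fun v : ℝ => ξ * κ v * φ (ξ, ξ)) = fun v : ℝ => (ξ * φ (ξ, ξ)) * κ v := by
        funext v; ring
      rw [this, integral_const_mul, hκint, mul_one]
    rwa [hval] at key
  -- outer convergence
  have hbd2 : Integrable ((Icc (-1:ℝ) 1).indicator (fun _ => 4*ξ*(κ 0)*(2*C1))) := by
    rw [integrable_indicator_iff measurableSet_Icc]
    exact integrableOn_const measure_Icc_lt_top.ne
  have key := tendsto_integral_filter_of_dominated_convergence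
    (μ := volume) (l := 𝓝[>] (0:ℝ))
    (F := fun ε u => ξ/(1+ε*u)^2 * κ u *
        (∫ v : ℝ, ξ/(1+ε*v)^2 * κ v * φ (ξ/(1+ε*u), ξ/(1+ε*v))))
    (f := fun u => ξ * κ u * (ξ * φ (ξ, ξ)))
    ((Icc (-1:ℝ) 1).indicator (fun _ => 4*ξ*(κ 0)*(2*C1)))
    (Filter.Eventually.of_forall (fun ε => by
      have hG : Measurable (fun p : ℝ × ℝ =>
          ξ/(1+ε*p.2)^2 * κ p.2 * φ (ξ/(1+ε*p.1), ξ/(1+ε*p.2))) := by fun_prop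
      have hJ : StronglyMeasurable (fun u : ℝ =>
          ∫ v : ℝ, ξ/(1+ε*v)^2 * κ v * φ (ξ/(1+ε*u), ξ/(1+ε*v))) :=
        hG.stronglyMeasurable.integral_prod_right'
      exact ((by fun_prop : Measurable (fun u : ℝ => ξ/(1+ε*u)^2 * κ u)).stronglyMeasurable.mul
        hJ).aestronglyMeasurable))
    (by filter_upwards [hev] with ε hε
        refine Filter.Eventually.of_forall (fun u => ?_)
        by_cases hu : u ∈ Icc (-1:ℝ) 1
        · rw [indicator_of_mem hu]
          obtain ⟨hb, hp⟩ := sq_bound hε.1 hε.2.le hu.1 hu.2 hξ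
          have b1 : |ξ/(1+ε*u)^2| ≤ 4*ξ := by
            rw [abs_of_pos (div_pos hξ (by positivity))]; exact hb
          rw [norm_mul, norm_mul]
          exact mul_le_mul (mul_le_mul b1 (hκmax u) (abs_nonneg _) (by positivity))
            (hJbd ε hε _) (norm_nonneg _) (by positivity)
        · rw [indicator_of_notMem hu, kappa_zero hκsupp hu]
          simp)
    hbd2
    (Filter.Eventually.of_forall (fun u => by
      have t1 : Tendsto (fun ε : ℝ => ξ/(1+ε*u)^2) (𝓝[>] 0) (𝓝 ξ) := cont_aux
      exact (t1.mul tendsto_const_nhds).mul (hinner u)))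
  have hval : (∫ u : ℝ, ξ * κ u * (ξ * φ (ξ, ξ))) = ξ^2 * φ (ξ, ξ) := by
    have : (fun u : ℝ => ξ * κ u * (ξ * φ (ξ, ξ))) = fun u : ℝ => (ξ^2 * φ (ξ, ξ)) * κ u := by
      funext u; ring
    rw [this, integral_const_mul, hκint, mul_one]
  rwa [hval] at key

noncomputable def Dker (κ : ℝ → ℝ) (φ : ℝ × ℝ → ℝ) (ε ξ : ℝ) : ℝ :=
  ∫ r₁ in Set.Ioi (0:ℝ), ∫ r₂ in Set.Ioi (0:ℝ),
    (ε⁻¹ * κ ((ξ/r₁ - 1)/ε)) * (ε⁻¹ * κ ((ξ/r₂ - 1)/ε)) * φ (r₁, r₂)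

section
variable {κ : ℝ → ℝ} {φ : ℝ × ℝ → ℝ} {Cφ δ M R ε : ℝ}

lemma integrable_of_bdd_supp' {α : Type*} [MeasurableSpace α] {μ : Measure α} {g : α → ℝ}
    (hg : AEStronglyMeasurable g μ) {S : Set α} (hS : MeasurableSet S) (hSfin : μ S < ⊤)
    {C : ℝ} (hbd : ∀ x, ‖g x‖ ≤ C) (hsupp : ∀ x, x ∉ S → g x = 0) : Integrable g μ := by
  refine Integrable.mono' (g := S.indicator (fun _ => C))
    ((integrable_indicator_iff hS).mpr (integrableOn_const hSfin.ne)) hg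
    (Filter.Eventually.of_forall fun x => ?_)
  by_cases hx : x ∈ S
  · rw [indicator_of_mem hx]; exact hbd x
  · rw [indicator_of_notMem hx, hsupp x hx]; simp

lemma fubini_step (hκcont : Continuous κ) (hκmax : ∀ x, |κ x| ≤ κ 0)
    (hφcont : Continuous φ) (hCφ : ∀ p, ‖φ p‖ ≤ Cφ)
    (hδM : ∀ p : ℝ × ℝ, φ p ≠ 0 → δ ≤ p.1 ∧ p.1 ≤ M ∧ δ ≤ p.2 ∧ p.2 ≤ M)
    (hR : 0 < R) (hε : 0 < ε) :
    (∫ r₁ in Set.Ioi (0:ℝ), ∫ r₂ in Set.Ioi (0:ℝ),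
      (∫ ξ in (-R)..R, (ε⁻¹ * κ ((ξ/r₁ - 1)/ε)) * (ε⁻¹ * κ ((ξ/r₂ - 1)/ε))) * φ (r₁, r₂))
    = ∫ ξ in Set.Ioc (-R) R, Dker κ φ ε ξ := by
  have hκ0 : 0 ≤ κ 0 := le_trans (abs_nonneg _) (hκmax 0)
  set C : ℝ := (ε⁻¹ * κ 0) * (ε⁻¹ * κ 0) * Cφ with hC
  -- pointwise bound on the integrand
  have hbd : ∀ ξ r₁ r₂ : ℝ,
      ‖(ε⁻¹ * κ ((ξ/r₁ - 1)/ε)) * (ε⁻¹ * κ ((ξ/r₂ - 1)/ε)) * φ (r₁, r₂)‖ ≤ C := by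
    intro ξ r₁ r₂
    have hk : ∀ x : ℝ, ‖ε⁻¹ * κ x‖ ≤ ε⁻¹ * κ 0 := by
      intro x
      rw [norm_mul, Real.norm_eq_abs, Real.norm_eq_abs, abs_of_pos (by positivity : (0:ℝ) < ε⁻¹)]
      exact mul_le_mul_of_nonneg_left (hκmax x) (by positivity)
    rw [norm_mul, norm_mul]
    exact mul_le_mul (mul_le_mul (hk _) (hk _) (norm_nonneg _) (by positivity))
      (hCφ _) (norm_nonneg _) (by positivity)
  have hCφ0 : 0 ≤ Cφ := le_trans (norm_nonneg _) (hCφ (0, 0))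
  -- support fact
  have hzero : ∀ r₁ r₂ : ℝ, r₁ ∉ Icc δ M ∨ r₂ ∉ Icc δ M → φ (r₁, r₂) = 0 := by
    intro r₁ r₂ h
    by_contra hne
    obtain ⟨h1, h2, h3, h4⟩ := hδM (r₁, r₂) hne
    rcases h with h | h
    · exact h ⟨h1, h2⟩
    · exact h ⟨h3, h4⟩
  set μ0 : Measure ℝ := volume.restrict (Set.Ioi 0) with hμ0
  set ν : Measure ℝ := volume.restrict (Set.Ioc (-R) R) with hν
  have hμ0Icc : μ0 (Icc δ M) < ⊤ := by
    rw [hμ0, Measure.restrict_apply measurableSet_Icc]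
    exact lt_of_le_of_lt (measure_mono inter_subset_left) measure_Icc_lt_top
  have hνuniv : ν univ < ⊤ := by
    rw [hν, Measure.restrict_apply_univ]
    exact measure_Ioc_lt_top
  -- step 1: push φ inside, convert to set integral
  have e1 : ∀ r₁ r₂ : ℝ,
      (∫ ξ in (-R)..R, (ε⁻¹ * κ ((ξ/r₁ - 1)/ε)) * (ε⁻¹ * κ ((ξ/r₂ - 1)/ε))) * φ (r₁, r₂)
      = ∫ ξ in Set.Ioc (-R) R,
          (ε⁻¹ * κ ((ξ/r₁ - 1)/ε)) * (ε⁻¹ * κ ((ξ/r₂ - 1)/ε)) * φ (r₁, r₂) := by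
    intro r₁ r₂
    rw [← intervalIntegral.integral_mul_const, intervalIntegral.integral_of_le (by linarith)]
  simp_rw [e1]
  -- step 2: swap r₂ and ξ for each r₁
  have int₁ : ∀ r₁ : ℝ, Integrable (Function.uncurry fun r₂ ξ =>
      (ε⁻¹ * κ ((ξ/r₁ - 1)/ε)) * (ε⁻¹ * κ ((ξ/r₂ - 1)/ε)) * φ (r₁, r₂)) (μ0.prod ν) := by
    intro r₁
    apply integrable_of_bdd_supp' (S := Icc δ M ×ˢ (univ : Set ℝ))
      ((by fun_prop : Measurable (fun p : ℝ × ℝ =>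
        (ε⁻¹ * κ ((p.2/r₁ - 1)/ε)) * (ε⁻¹ * κ ((p.2/p.1 - 1)/ε)) * φ (r₁, p.1))).aestronglyMeasurable)
      (measurableSet_Icc.prod MeasurableSet.univ)
      (by rw [Measure.prod_prod]; exact ENNReal.mul_lt_top hμ0Icc hνuniv)
      (C := C) (fun p => hbd p.2 r₁ p.1)
      (fun p hp => by
        have : p.1 ∉ Icc δ M := by simpa using hp
        simp [Function.uncurry, hzero r₁ p.1 (Or.inr this)])
  have swap1 : ∀ r₁ : ℝ,
      (∫ r₂ in Set.Ioi (0:ℝ), ∫ ξ in Set.Ioc (-R) R,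
        (ε⁻¹ * κ ((ξ/r₁ - 1)/ε)) * (ε⁻¹ * κ ((ξ/r₂ - 1)/ε)) * φ (r₁, r₂))
      = ∫ ξ in Set.Ioc (-R) R, ∫ r₂ in Set.Ioi (0:ℝ),
        (ε⁻¹ * κ ((ξ/r₁ - 1)/ε)) * (ε⁻¹ * κ ((ξ/r₂ - 1)/ε)) * φ (r₁, r₂) :=
    fun r₁ => integral_integral_swap (int₁ r₁)
  simp_rw [hμ0, swap1]
  -- step 3: swap r₁ and ξ
  have int₃ : Integrable (fun q : (ℝ × ℝ) × ℝ =>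
      (ε⁻¹ * κ ((q.1.2/q.1.1 - 1)/ε)) * (ε⁻¹ * κ ((q.1.2/q.2 - 1)/ε)) * φ (q.1.1, q.2))
      ((μ0.prod ν).prod μ0) := by
    apply integrable_of_bdd_supp' (S := (Icc δ M ×ˢ (univ : Set ℝ)) ×ˢ Icc δ M)
      ((by fun_prop : Measurable (fun q : (ℝ × ℝ) × ℝ =>
        (ε⁻¹ * κ ((q.1.2/q.1.1 - 1)/ε)) * (ε⁻¹ * κ ((q.1.2/q.2 - 1)/ε)) * φ (q.1.1, q.2))).aestronglyMeasurable)
      (((measurableSet_Icc.prod MeasurableSet.univ)).prod measurableSet_Icc)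
      (by rw [Measure.prod_prod, Measure.prod_prod]
          exact ENNReal.mul_lt_top (ENNReal.mul_lt_top hμ0Icc hνuniv) hμ0Icc)
      (C := C) (fun q => hbd q.1.2 q.1.1 q.2)
      (fun q hq => by
        have : q.1.1 ∉ Icc δ M ∨ q.2 ∉ Icc δ M := by
          by_contra hcon
          push_neg at hcon
          exact hq ⟨⟨hcon.1, trivial⟩, hcon.2⟩
        simp [hzero q.1.1 q.2 this])
  have int₂ : Integrable (Function.uncurry fun r₁ ξ => ∫ r₂ in Set.Ioi (0:ℝ),
      (ε⁻¹ * κ ((ξ/r₁ - 1)/ε)) * (ε⁻¹ * κ ((ξ/r₂ - 1)/ε)) * φ (r₁, r₂)) (μ0.prod ν) :=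
    int₃.integral_prod_left
  exact integral_integral_swap int₂

end

section
variable {κ : ℝ → ℝ} {φ : ℝ × ℝ → ℝ} {Cφ δ M R : ℝ}

lemma Dker_zero (hκsupp : Function.support κ ⊆ Set.Icc (-1) 1)
    {ε ξ : ℝ} (hε : 0 < ε) (hε2 : ε < 1/2) (hξ : ξ ≤ 0) : Dker κ φ ε ξ = 0 := by
  unfold Dker
  rw [setIntegral_congr_fun (g := fun _ => (0:ℝ)) measurableSet_Ioi, integral_zero]
  intro r₁ hr₁
  have hr₁' : (0:ℝ) < r₁ := hr₁
  have hdiv : ξ/r₁ ≤ 0 := by apply div_nonpos_of_nonpos_of_nonneg <;> linarith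
  have h2 : (ξ/r₁ - 1)/ε ≤ -2 := by
    rw [div_le_iff₀ hε]
    nlinarith
  have : κ ((ξ/r₁ - 1)/ε) = 0 := kappa_zero hκsupp (by
    simp only [Set.mem_Icc, not_and_or]
    left; push_neg; linarith)
  simp [this]

lemma Dker_subst (hκsupp : Function.support κ ⊆ Set.Icc (-1) 1)
    {ε ξ : ℝ} (hε : 0 < ε) (hε2 : ε < 1/2) (hξ : 0 < ξ) :
    Dker κ φ ε ξ = ∫ u : ℝ, ξ/(1+ε*u)^2 * κ u *
      (∫ v : ℝ, ξ/(1+ε*v)^2 * κ v * φ (ξ/(1+ε*u), ξ/(1+ε*v))) := by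
  unfold Dker
  have h1 : ∀ r₁ : ℝ,
      (∫ r₂ in Set.Ioi (0:ℝ), (ε⁻¹ * κ ((ξ/r₁ - 1)/ε)) * (ε⁻¹ * κ ((ξ/r₂ - 1)/ε)) * φ (r₁, r₂))
      = ε⁻¹ * κ ((ξ/r₁ - 1)/ε) *
          ∫ r₂ in Set.Ioi (0:ℝ), ε⁻¹ * κ ((ξ/r₂ - 1)/ε) * φ (r₁, r₂) := by
    intro r₁
    rw [← integral_const_mul]
    exact setIntegral_congr_fun measurableSet_Ioi (fun r₂ _ => by ring)
  simp_rw [h1]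
  rw [subst_lemma hκsupp hξ hε hε2
    (fun r => ∫ r₂ in Set.Ioi (0:ℝ), ε⁻¹ * κ ((ξ/r₂ - 1)/ε) * φ (r, r₂))]
  refine integral_congr_ae (Filter.Eventually.of_forall (fun u => ?_))
  beta_reduce
  rw [subst_lemma hκsupp hξ hε hε2 (fun r₂ => φ (ξ/(1+ε*u), r₂))]

lemma Dker_meas (hκcont : Continuous κ) (hφcont : Continuous φ)
    {ε : ℝ} : AEStronglyMeasurable (Dker κ φ ε) (volume.restrict (Set.Ioc (-R) R)) := by
  have h3 : Measurable (fun q : (ℝ × ℝ) × ℝ =>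
      (ε⁻¹ * κ ((q.1.1/q.1.2 - 1)/ε)) * (ε⁻¹ * κ ((q.1.1/q.2 - 1)/ε)) * φ (q.1.2, q.2)) := by
    fun_prop
  have h2 : StronglyMeasurable (fun z : ℝ × ℝ => ∫ r₂ in Set.Ioi (0:ℝ),
      (ε⁻¹ * κ ((z.1/z.2 - 1)/ε)) * (ε⁻¹ * κ ((z.1/r₂ - 1)/ε)) * φ (z.2, r₂)) :=
    h3.stronglyMeasurable.integral_prod_right'
  have h1 : StronglyMeasurable (Dker κ φ ε) := h2.integral_prod_right'
  exact h1.aestronglyMeasurable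

end

section
variable {κ : ℝ → ℝ} {φ : ℝ × ℝ → ℝ} {Cφ δ M R : ℝ}

lemma core (hκcont : Continuous κ) (hκmax : ∀ x, |κ x| ≤ κ 0)
    (hκsupp : Function.support κ ⊆ Set.Icc (-1) 1) (hκint : (∫ x : ℝ, κ x) = 1)
    (hφcont : Continuous φ) (hCφ : ∀ p, ‖φ p‖ ≤ Cφ)
    (hδM : ∀ p : ℝ × ℝ, φ p ≠ 0 → δ ≤ p.1 ∧ p.1 ≤ M ∧ δ ≤ p.2 ∧ p.2 ≤ M)
    (hR : 0 < R) :
    Tendsto (fun ε : ℝ =>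
        ∫ r₁ in Set.Ioi (0:ℝ), ∫ r₂ in Set.Ioi (0:ℝ),
          (∫ ξ in (-R)..R, (ε⁻¹ * κ ((ξ/r₁ - 1)/ε)) * (ε⁻¹ * κ ((ξ/r₂ - 1)/ε))) * φ (r₁, r₂))
      (𝓝[>] 0) (𝓝 (∫ ξ in (0:ℝ)..R, ξ^2 * φ (ξ, ξ))) := by
  have hκ0 : 0 ≤ κ 0 := le_trans (abs_nonneg _) (hκmax 0)
  have hCφ0 : 0 ≤ Cφ := le_trans (norm_nonneg _) (hCφ (0, 0))
  have hev : ∀ᶠ ε in 𝓝[>] (0:ℝ), ε ∈ Ioo (0:ℝ) (1/2) :=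
    Ioo_mem_nhdsGT_of_mem ⟨le_rfl, by norm_num⟩
  have main : Tendsto (fun ε => ∫ ξ in Set.Ioc (-R) R, Dker κ φ ε ξ) (𝓝[>] 0)
      (𝓝 (∫ ξ in Set.Ioc (-R) R, (Set.Ioi (0:ℝ)).indicator (fun ξ => ξ^2 * φ (ξ, ξ)) ξ)) := by
    apply tendsto_integral_filter_of_dominated_convergence
      (bound := fun _ => 64*R^2*(κ 0)^2*Cφ)
    · exact Filter.Eventually.of_forall (fun ε => Dker_meas hκcont hφcont)
    · filter_upwards [hev] with ε hε
      apply ae_restrict_of_forall_mem measurableSet_Ioc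
      intro ξ hξmem
      rcases le_or_gt ξ 0 with h | h
      · rw [Dker_zero hκsupp hε.1 hε.2 h]
        simpa using (by positivity : (0:ℝ) ≤ 64*R^2*(κ 0)^2*Cφ)
      · rw [Dker_subst hκsupp hε.1 hε.2 h]
        have hinner : ∀ u : ℝ,
            ‖∫ v : ℝ, ξ/(1+ε*v)^2 * κ v * φ (ξ/(1+ε*u), ξ/(1+ε*v))‖ ≤ 8*ξ*(κ 0)*Cφ :=
          fun u => gen_bound hκmax hκsupp hε.1 hε.2.le h hCφ0 (fun v => hCφ _)
        refine le_trans (gen_bound hκmax hκsupp hε.1 hε.2.le h (by positivity) hinner) ?_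
        have hξR : ξ ≤ R := hξmem.2
        have key : 0 ≤ (R - ξ) * (R + ξ) * ((κ 0)^2 * Cφ) :=
          mul_nonneg (mul_nonneg (by linarith) (by linarith))
            (mul_nonneg (sq_nonneg _) hCφ0)
        nlinarith [key]
    · exact integrableOn_const measure_Ioc_lt_top.ne
    · apply ae_restrict_of_forall_mem measurableSet_Ioc
      intro ξ hξmem
      rcases le_or_gt ξ 0 with h | h
      · have h0 : (Set.Ioi (0:ℝ)).indicator (fun ξ => ξ^2 * φ (ξ, ξ)) ξ = 0 :=
          indicator_of_notMem (by simpa using h) _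
        rw [h0]
        apply Tendsto.congr' _ tendsto_const_nhds
        filter_upwards [hev] with ε hε
        exact (Dker_zero hκsupp hε.1 hε.2 h).symm
      · rw [indicator_of_mem (mem_Ioi.mpr h)]
        apply Tendsto.congr' _ (pointwise_limit hκcont hκmax hκsupp hκint hφcont hCφ h)
        filter_upwards [hev] with ε hε
        exact (Dker_subst hκsupp hε.1 hε.2 h).symm
  have hlim : (∫ ξ in Set.Ioc (-R) R, (Set.Ioi (0:ℝ)).indicator (fun ξ => ξ^2 * φ (ξ, ξ)) ξ)
      = ∫ ξ in (0:ℝ)..R, ξ^2 * φ (ξ, ξ) := by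
    rw [setIntegral_indicator measurableSet_Ioi, intervalIntegral.integral_of_le hR.le,
      Set.Ioc_inter_Ioi, sup_eq_right.mpr (by linarith : -R ≤ (0:ℝ))]
  rw [hlim] at main
  apply Tendsto.congr' _ main
  filter_upwards [hev] with ε hε
  exact (fubini_step hκcont hκmax hφcont hCφ hδM hR hε.1).symm

end

section
variable {κ : ℝ → ℝ}

lemma cross_zero₁ (hκsupp : Function.support κ ⊆ Set.Icc (-1) 1)
    {ε : ℝ} (hε : 0 < ε) (hε1 : ε < 1) {r₁ r₂ : ℝ} (h₁ : 0 < r₁) (h₂ : 0 < r₂) (ξ : ℝ) :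
    (ε⁻¹ * κ ((ξ/r₁ - 1)/ε)) * (ε⁻¹ * κ ((ξ/r₂ - (-1:ℝ))/ε)) = 0 := by
  rcases le_or_gt ξ 0 with h | h
  · have hd : ξ/r₁ ≤ 0 := by apply div_nonpos_of_nonpos_of_nonneg <;> linarith
    have hlt : (ξ/r₁ - 1)/ε < -1 := by rw [div_lt_iff₀ hε]; nlinarith
    have : κ ((ξ/r₁ - 1)/ε) = 0 := kappa_zero hκsupp (by
      simp only [Set.mem_Icc, not_and_or]; left; push_neg; linarith)
    simp [this]
  · have hd : 0 < ξ/r₂ := div_pos h h₂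
    have hlt : 1 < (ξ/r₂ - (-1:ℝ))/ε := by rw [lt_div_iff₀ hε]; nlinarith
    have : κ ((ξ/r₂ - (-1:ℝ))/ε) = 0 := kappa_zero hκsupp (by
      simp only [Set.mem_Icc, not_and_or]; right; push_neg; linarith)
    rw [sub_neg_eq_add] at this
    simp [this]

lemma cross_zero₂ (hκsupp : Function.support κ ⊆ Set.Icc (-1) 1)
    {ε : ℝ} (hε : 0 < ε) (hε1 : ε < 1) {r₁ r₂ : ℝ} (h₁ : 0 < r₁) (h₂ : 0 < r₂) (ξ : ℝ) :
    (ε⁻¹ * κ ((ξ/r₁ - (-1:ℝ))/ε)) * (ε⁻¹ * κ ((ξ/r₂ - 1)/ε)) = 0 := by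
  rcases le_or_gt ξ 0 with h | h
  · have hd : ξ/r₂ ≤ 0 := by apply div_nonpos_of_nonpos_of_nonneg <;> linarith
    have hlt : (ξ/r₂ - 1)/ε < -1 := by rw [div_lt_iff₀ hε]; nlinarith
    have : κ ((ξ/r₂ - 1)/ε) = 0 := kappa_zero hκsupp (by
      simp only [Set.mem_Icc, not_and_or]; left; push_neg; linarith)
    simp [this]
  · have hd : 0 < ξ/r₁ := div_pos h h₁
    have hlt : 1 < (ξ/r₁ - (-1:ℝ))/ε := by rw [lt_div_iff₀ hε]; nlinarith
    have : κ ((ξ/r₁ - (-1:ℝ))/ε) = 0 := kappa_zero hκsupp (by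
      simp only [Set.mem_Icc, not_and_or]; right; push_neg; linarith)
    rw [sub_neg_eq_add] at this
    simp [this]

end

/-- Mollified limit (δ–δ case): for a normalized bump κ, R > 0, a, b ∈ {0,1} and a test
function φ on (0,∞)², the regularized kernel built from δ_{(−1)^a} and δ_{(−1)^b}
converges to δ_{ab} ∫_0^R ξ² φ(ξ,ξ) dξ. -/
theorem mollified_delta_delta (κ : ℝ → ℝ) (hκsmooth : ContDiff ℝ (⊤ : ℕ∞) κ)
    (hκeven : ∀ x, κ (-x) = κ x) (hκnonneg : ∀ x, 0 ≤ κ x)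
    (hκmono : ∀ x y : ℝ, 0 ≤ x → x ≤ y → κ y ≤ κ x)
    (hκsupp : Function.support κ ⊆ Set.Icc (-1) 1)
    (hκint : (∫ x : ℝ, κ x) = 1)
    (R : ℝ) (hR : 0 < R) (a b : ℕ) (ha : a ≤ 1) (hb : b ≤ 1)
    (φ : ℝ × ℝ → ℝ) (hφ : ContDiff ℝ (⊤ : ℕ∞) φ) (hφc : HasCompactSupport φ)
    (hφsupp : tsupport φ ⊆ {p : ℝ × ℝ | 0 < p.1 ∧ 0 < p.2}) :
    Tendsto (fun ε : ℝ =>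
        ∫ r₁ in Set.Ioi (0 : ℝ), ∫ r₂ in Set.Ioi (0 : ℝ),
          (∫ ξ in (-R)..R,
            (ε⁻¹ * κ ((ξ / r₁ - (-1 : ℝ) ^ a) / ε)) *
            (ε⁻¹ * κ ((ξ / r₂ - (-1 : ℝ) ^ b) / ε))) * φ (r₁, r₂))
      (𝓝[>] 0)
      (𝓝 ((if a = b then (1 : ℝ) else 0) * ∫ ξ in (0 : ℝ)..R, ξ ^ 2 * φ (ξ, ξ))) := by
  have hκcont : Continuous κ := hκsmooth.continuous
  have hκmax : ∀ x, |κ x| ≤ κ 0 := fun x => by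
    rw [abs_of_nonneg (hκnonneg x)]; exact kappa_le hκeven hκmono x
  have hφcont : Continuous φ := hφ.continuous
  obtain ⟨Cφ, hCφ⟩ := hφc.exists_bound_of_continuous hφcont
  obtain ⟨δ, M, hδ, hδM0, hδM⟩ := phi_bounds hφcont hφc hφsupp
  have hδM' : ∀ p : ℝ × ℝ, φ p ≠ 0 → δ ≤ p.1 ∧ p.1 ≤ M ∧ δ ≤ p.2 ∧ p.2 ≤ M :=
    fun p hp => ⟨(hδM p hp).1, (hδM p hp).2.1, (hδM p hp).2.2.1, (hδM p hp).2.2.2⟩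
  have hcore := core hκcont hκmax hκsupp hκint hφcont hCφ hδM' hR
  have hev1 : ∀ᶠ ε in 𝓝[>] (0:ℝ), ε ∈ Ioo (0:ℝ) 1 :=
    Ioo_mem_nhdsGT_of_mem ⟨le_rfl, by norm_num⟩
  interval_cases a <;> interval_cases b
  · -- a = 0, b = 0
    simp only [pow_zero]
    rw [if_pos trivial, one_mul]
    exact hcore
  · -- a = 0, b = 1
    simp only [pow_zero, pow_one]
    rw [if_neg (by decide : ¬(0:ℕ) = 1), zero_mul]
    apply Tendsto.congr' _ (tendsto_const_nhds (x := (0:ℝ)))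
    filter_upwards [hev1] with ε hε
    symm
    beta_reduce
    rw [setIntegral_congr_fun (g := fun _ => (0:ℝ)) measurableSet_Ioi ?_, integral_zero]
    intro r₁ hr₁
    beta_reduce
    rw [setIntegral_congr_fun (g := fun _ => (0:ℝ)) measurableSet_Ioi ?_, integral_zero]
    intro r₂ hr₂
    show (∫ ξ in (-R)..R, (ε⁻¹ * κ ((ξ/r₁ - 1)/ε)) * (ε⁻¹ * κ ((ξ/r₂ - (-1:ℝ))/ε))) * φ (r₁, r₂) = 0
    rw [intervalIntegral.integral_congr (g := fun _ => (0:ℝ))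
      (fun ξ _ => cross_zero₁ hκsupp hε.1 hε.2 hr₁ hr₂ ξ), intervalIntegral.integral_zero, zero_mul]
  · -- a = 1, b = 0
    simp only [pow_zero, pow_one]
    rw [if_neg (by decide : ¬(1:ℕ) = 0), zero_mul]
    apply Tendsto.congr' _ (tendsto_const_nhds (x := (0:ℝ)))
    filter_upwards [hev1] with ε hε
    symm
    beta_reduce
    rw [setIntegral_congr_fun (g := fun _ => (0:ℝ)) measurableSet_Ioi ?_, integral_zero]
    intro r₁ hr₁
    beta_reduce
    rw [setIntegral_congr_fun (g := fun _ => (0:ℝ)) measurableSet_Ioi ?_, integral_zero]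
    intro r₂ hr₂
    show (∫ ξ in (-R)..R, (ε⁻¹ * κ ((ξ/r₁ - (-1:ℝ))/ε)) * (ε⁻¹ * κ ((ξ/r₂ - 1)/ε))) * φ (r₁, r₂) = 0
    rw [intervalIntegral.integral_congr (g := fun _ => (0:ℝ))
      (fun ξ _ => cross_zero₂ hκsupp hε.1 hε.2 hr₁ hr₂ ξ), intervalIntegral.integral_zero, zero_mul]
  · -- a = 1, b = 1
    simp only [pow_one]
    rw [if_pos trivial, one_mul]
    refine Tendsto.congr (fun ε => ?_) hcore
    refine integral_congr_ae (Filter.Eventually.of_forall (fun r₁ => ?_))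
    beta_reduce
    refine integral_congr_ae (Filter.Eventually.of_forall (fun r₂ => ?_))
    beta_reduce
    congr 1
    have hpt : ∀ r ξ : ℝ, ε⁻¹ * κ ((ξ/r - (-1:ℝ))/ε) = ε⁻¹ * κ (((-ξ)/r - 1)/ε) := by
      intro r ξ
      rw [show ((-ξ)/r - 1)/ε = -((ξ/r - (-1:ℝ))/ε) by ring, hκeven]
    calc (∫ ξ in (-R)..R, (ε⁻¹ * κ ((ξ/r₁ - 1)/ε)) * (ε⁻¹ * κ ((ξ/r₂ - 1)/ε)))
        = ∫ ξ in (-R)..(-(-R)), (ε⁻¹ * κ ((ξ/r₁ - 1)/ε)) * (ε⁻¹ * κ ((ξ/r₂ - 1)/ε)) := by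
          norm_num
      _ = ∫ ξ in (-R)..R, (ε⁻¹ * κ (((-ξ)/r₁ - 1)/ε)) * (ε⁻¹ * κ (((-ξ)/r₂ - 1)/ε)) :=
          (intervalIntegral.integral_comp_neg
            (fun ξ => (ε⁻¹ * κ ((ξ/r₁ - 1)/ε)) * (ε⁻¹ * κ ((ξ/r₂ - 1)/ε)))).symm
      _ = ∫ ξ in (-R)..R, (ε⁻¹ * κ ((ξ/r₁ - (-1:ℝ))/ε)) * (ε⁻¹ * κ ((ξ/r₂ - (-1:ℝ))/ε)) :=
          intervalIntegral.integral_congr (fun ξ _ => by rw [hpt, hpt])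
end
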